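/- arXiv:1801.02519 — 8 statements merged into one kernel-verified Lean document; each statement's English description precedes it below -/
import Mathlib

section
/- If there exists a Fano Kaleidoscopic difference family FKDF(G) in a finite additive group G of order v, then there exists a G-regular Fano Kaleidoscope FK(v): the colored planes are all translates B_i + g (g ∈ G) of the tuples B_i of the family, with the j-th line of each translate colored c_j. -/
section KaleidoscopeDefs

variable {G V : Type*}

/-- The multiset of differences `x - y` over ordered pairs of distinct elements of `B`. -/
def diffMultiset [AddGroup G] [DecidableEq G] (B : Finset G) : Multiset G :=
  ((B ×ˢ B).filter fun p => p.1 ≠ p.2).val.map fun p => p.1 - p.2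

/-- A `(G, k, lam)`-difference family, given as a multiset of blocks. -/
def IsDiffFamily [AddGroup G] [DecidableEq G] (k lam : ℕ) (𝓕 : Multiset (Finset G)) : Prop :=
  (∀ B ∈ 𝓕, B.card = k) ∧ ∀ g : G, g ≠ 0 → (𝓕.bind diffMultiset).count g = lam

/-- The `j`-th line `{b_j, b_{j+1}, b_{j+3}}` (indices mod 7) of an ordered 7-tuple. -/
def fanoLine [DecidableEq G] (B : Fin 7 → G) (j : Fin 7) : Finset G :=
  {B j, B (j + 1), B (j + 3)}

/-- A Fano Kaleidoscopic difference family: a family of ordered 7-tuples of distinct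
elements such that for each `j` the family of `j`-th lines is a `(G,3,1)`-DF. -/
def IsFKDF [AddGroup G] [DecidableEq G] (𝓕 : Multiset (Fin 7 → G)) : Prop :=
  (∀ B ∈ 𝓕, Function.Injective B) ∧
    ∀ j : Fin 7, IsDiffFamily 3 1 (𝓕.map fun B => fanoLine B j)

/-- The `i`-th line of an ordered 9-tuple `(binf, b_0, …, b_7)`:
`{b_i, b_{i+1}, b_{i+3}}` (indices mod 8) for `0 ≤ i ≤ 7`, and
`{binf, b_{i-8}, b_{i-4}}` for `8 ≤ i ≤ 11`. -/
def hesseLine [DecidableEq G] (binf : G) (b : Fin 8 → G) (i : Fin 12) : Finset G :=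
  if h : (i : ℕ) < 8 then
    {b ⟨i, h⟩, b (⟨i, h⟩ + 1), b (⟨i, h⟩ + 3)}
  else
    {binf, b ⟨(i : ℕ) - 8, by have := i.isLt; omega⟩,
      b (⟨(i : ℕ) - 8, by have := i.isLt; omega⟩ + 4)}

/-- A Hesse Kaleidoscopic difference family: a family of ordered 9-tuples of distinct
elements such that for each `i` the family of `i`-th lines is a `(G,3,1)`-DF. -/
def IsHKDF [AddGroup G] [DecidableEq G] (𝓕 : Multiset (G × (Fin 8 → G))) : Prop :=
  (∀ B ∈ 𝓕, Function.Injective B.2 ∧ ∀ k, B.1 ≠ B.2 k) ∧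
    ∀ i : Fin 12, IsDiffFamily 3 1 (𝓕.map fun B => hesseLine B.1 B.2 i)

/-- The point set of a colored plane given by its (colored) lines. -/
def linesPts [DecidableEq V] {n : ℕ} (L : Fin n → Finset V) : Finset V :=
  Finset.univ.biUnion L

/-- `L` describes a Fano plane with points in `V`, where `L i` is the line colored `c_i`:
7 points, seven 3-element lines, and any two distinct points on exactly one line. -/
def IsColoredFano [DecidableEq V] (L : Fin 7 → Finset V) : Prop :=
  (linesPts L).card = 7 ∧ (∀ i, (L i).card = 3) ∧
    ∀ x y : V, x ∈ linesPts L → y ∈ linesPts L → x ≠ y →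
      ∃! i : Fin 7, x ∈ L i ∧ y ∈ L i

/-- A Fano Kaleidoscope on the point set `V`: a multiset of line-colored Fano planes such
that for all distinct `x y` and every color `i` exactly one plane has `x, y` on its
`c_i`-colored line. -/
def IsFanoKaleidoscope [DecidableEq V] (K : Multiset (Fin 7 → Finset V)) : Prop :=
  (∀ L ∈ K, IsColoredFano L) ∧
    ∀ x y : V, x ≠ y → ∀ i : Fin 7,
      Multiset.countP (fun L => x ∈ L i ∧ y ∈ L i) K = 1

/-- A `G`-regular Fano Kaleidoscope: a Fano Kaleidoscope with point set `G` invariant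
(with colors) under all translations. -/
def IsRegularFK (G : Type*) [AddGroup G] [DecidableEq G]
    (K : Multiset (Fin 7 → Finset G)) : Prop :=
  IsFanoKaleidoscope K ∧ ∀ g : G, K.map (fun L => fun i => (L i).image (· + g)) = K

/-- `L` describes a Hesse plane (an `AG(2,3)`) with points in `V`, where `L i` is the line
colored `c_i`. -/
def IsColoredHesse [DecidableEq V] (L : Fin 12 → Finset V) : Prop :=
  (linesPts L).card = 9 ∧ (∀ i, (L i).card = 3) ∧
    ∀ x y : V, x ∈ linesPts L → y ∈ linesPts L → x ≠ y →
      ∃! i : Fin 12, x ∈ L i ∧ y ∈ L i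

/-- A Hesse Kaleidoscope on the point set `V`. -/
def IsHesseKaleidoscope [DecidableEq V] (K : Multiset (Fin 12 → Finset V)) : Prop :=
  (∀ L ∈ K, IsColoredHesse L) ∧
    ∀ x y : V, x ≠ y → ∀ i : Fin 12,
      Multiset.countP (fun L => x ∈ L i ∧ y ∈ L i) K = 1

/-- A `G`-regular Hesse Kaleidoscope. -/
def IsRegularHK (G : Type*) [AddGroup G] [DecidableEq G]
    (K : Multiset (Fin 12 → Finset G)) : Prop :=
  IsHesseKaleidoscope K ∧ ∀ g : G, K.map (fun L => fun i => (L i).image (· + g)) = K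

/-- An `(H, k, 1)`-difference matrix: a `k × |H|` matrix with entries in `H` such that the
difference of any two distinct rows contains each element of `H` exactly once. -/
def IsDiffMatrix (H : Type*) [AddGroup H] [Fintype H] (k : ℕ)
    (M : Fin k → Fin (Fintype.card H) → H) : Prop :=
  ∀ r s : Fin k, r ≠ s → Function.Bijective fun c => M r c - M s c

/-- A 2-`(v, k, lam)` design (block multiset) on the point set `V`. -/
def Is2Design [DecidableEq V] (k lam : ℕ) (𝓑 : Multiset (Finset V)) : Prop :=
  (∀ b ∈ 𝓑, b.card = k) ∧
    ∀ x y : V, x ≠ y → Multiset.countP (fun b => x ∈ b ∧ y ∈ b) 𝓑 = lam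

/-- A pairwise balanced design with block sizes in `K` on the point set `V`. -/
def IsPBD [DecidableEq V] (K : Set ℕ) (𝓑 : Multiset (Finset V)) : Prop :=
  (∀ b ∈ 𝓑, b.card ∈ K) ∧
    ∀ x y : V, x ≠ y → Multiset.countP (fun b => x ∈ b ∧ y ∈ b) 𝓑 = 1

/-- Existence of a Fano Kaleidoscope of order `v`. -/
def ExistsFK (v : ℕ) : Prop :=
  ∃ K : Multiset (Fin 7 → Finset (Fin v)), IsFanoKaleidoscope K

end KaleidoscopeDefs

private lemma countP_bind' {α β : Type*} (p : α → Prop) [DecidablePred p]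
    (s : Multiset β) (f : β → Multiset α) :
    Multiset.countP p (s.bind f) = (s.map fun b => Multiset.countP p (f b)).sum := by
  induction s using Multiset.induction with
  | empty => simp
  | cons a s ih => simp [ih]

private lemma mem_img_add {G : Type*} [AddCommGroup G] [DecidableEq G]
    {S : Finset G} {g x : G} : x ∈ S.image (· + g) ↔ x - g ∈ S := by
  constructor
  · rintro hx
    obtain ⟨a, ha, rfl⟩ := Finset.mem_image.1 hx
    simpa using ha
  · intro hx
    exact Finset.mem_image.2 ⟨x - g, hx, sub_add_cancel x g⟩

private lemma fano_idx : ∀ a b : Fin 7, a ≠ b → ∃ j : Fin 7,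
    ((a = j ∨ a = j+1 ∨ a = j+3) ∧ (b = j ∨ b = j+1 ∨ b = j+3)) ∧
    ∀ k : Fin 7, ((a = k ∨ a = k+1 ∨ a = k+3) ∧ (b = k ∨ b = k+1 ∨ b = k+3)) → k = j := by
  decide

private lemma count_trans {G : Type*} [AddCommGroup G] [Fintype G] [DecidableEq G]
    (L : Finset G) (x y : G) (hxy : x ≠ y) :
    Multiset.countP (fun g : G => x - g ∈ L ∧ y - g ∈ L) Finset.univ.val
      = Multiset.count (x - y) (diffMultiset L) := by
  rw [Multiset.countP_eq_card_filter, diffMultiset, Multiset.count_map]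
  rw [← Finset.filter_val, ← Finset.filter_val]
  show Finset.card _ = Finset.card _
  apply Finset.card_bij (fun g _ => ((x - g, y - g) : G × G))
  · intro g hg
    simp only [Finset.mem_filter, Finset.mem_univ, true_and] at hg
    simp only [Finset.mem_filter, Finset.mem_product]
    refine ⟨⟨⟨hg.1, hg.2⟩, ?_⟩, by abel⟩
    intro hc
    exact hxy (by have := sub_left_injective hc; simpa using this)
  · intro g₁ _ g₂ _ hgg
    have := congrArg Prod.fst hgg
    simp only at this
    have := sub_right_injective this
    simpa using this
  · rintro ⟨a, b⟩ hab
    simp only [Finset.mem_filter, Finset.mem_product] at hab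
    obtain ⟨⟨⟨ha, hb⟩, hne⟩, hd⟩ := hab
    have hd' : x - a = y - b := by
      rwa [sub_eq_sub_iff_sub_eq_sub] at hd
    have hxa : x - (x - a) = a := by abel
    have hyb : y - (x - a) = b := by rw [hd']; abel
    refine ⟨x - a, ?_, Prod.ext hxa hyb⟩
    simp only [Finset.mem_filter, Finset.mem_univ, true_and, hxa, hyb]
    exact ⟨ha, hb⟩

/-- An FKDF in a finite additive group `G` yields a `G`-regular Fano
Kaleidoscope, whose colored planes are all translates of the tuples of the family,
the `j`-th line of each translate colored `c_j`. -/
theorem regular_FK_of_FKDF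
    (G : Type) [AddCommGroup G] [Fintype G] [DecidableEq G]
    (𝓕 : Multiset (Fin 7 → G)) (h : IsFKDF 𝓕) :
    IsRegularFK G (𝓕.bind fun B =>
      (Finset.univ : Finset G).val.map fun g => fun j => (fanoLine B j).image (· + g)) := by
  obtain ⟨hinj, hDF⟩ := h
  refine ⟨⟨?_, ?_⟩, ?_⟩
  · -- each plane is a colored Fano plane
    intro L hL
    rw [Multiset.mem_bind] at hL
    obtain ⟨B, hB, hL⟩ := hL
    rw [Multiset.mem_map] at hL
    obtain ⟨g, _, rfl⟩ := hL
    have hBinj := hinj B hB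
    have key2 : ∀ (a : G) (j : Fin 7), a + g ∈ (fanoLine B j).image (· + g) ↔ a ∈ fanoLine B j := by
      intro a j
      rw [mem_img_add, add_sub_cancel_right]
    have key3 : ∀ (a j : Fin 7), B a + g ∈ (fanoLine B j).image (· + g) ↔
        (a = j ∨ a = j + 1 ∨ a = j + 3) := by
      intro a j
      rw [key2]
      simp [fanoLine, hBinj.eq_iff]
    have hpts : linesPts (fun j => (fanoLine B j).image (· + g))
        = Finset.univ.image (fun a : Fin 7 => B a + g) := by
      ext x
      simp only [linesPts, Finset.mem_biUnion, Finset.mem_univ, true_and, Finset.mem_image]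
      constructor
      · rintro ⟨j, hj⟩
        obtain ⟨c, hc, rfl⟩ := hj
        simp only [fanoLine, Finset.mem_insert, Finset.mem_singleton] at hc
        rcases hc with rfl | rfl | rfl
        · exact ⟨j, rfl⟩
        · exact ⟨j + 1, rfl⟩
        · exact ⟨j + 3, rfl⟩
      · rintro ⟨a, -, rfl⟩
        exact ⟨a, B a, by simp [fanoLine], rfl⟩
    have hinj' : Function.Injective (fun a : Fin 7 => B a + g) :=
      fun a b hab => hBinj (by simpa using hab)
    refine ⟨?_, ?_, ?_⟩
    · rw [hpts, Finset.card_image_of_injective _ hinj']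
      simp
    · intro i
      have hmem : fanoLine B i ∈ 𝓕.map (fun B => fanoLine B i) :=
        Multiset.mem_map_of_mem _ hB
      rw [Finset.card_image_of_injective _ (add_left_injective g)]
      exact (hDF i).1 _ hmem
    · intro x y hx hy hxy
      rw [hpts, Finset.mem_image] at hx hy
      obtain ⟨a, -, rfl⟩ := hx
      obtain ⟨b, -, rfl⟩ := hy
      have hab : a ≠ b := fun e => hxy (by rw [e])
      obtain ⟨j, hj, huniq⟩ := fano_idx a b hab
      exact ⟨j, ⟨(key3 a j).2 hj.1, (key3 b j).2 hj.2⟩,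
        fun k hk => huniq k ⟨(key3 a k).1 hk.1, (key3 b k).1 hk.2⟩⟩
  · -- counting
    intro x y hxy i
    rw [countP_bind']
    have step : ∀ B ∈ 𝓕,
        Multiset.countP (fun L : Fin 7 → Finset G => x ∈ L i ∧ y ∈ L i)
          ((Finset.univ : Finset G).val.map fun g => fun j => (fanoLine B j).image (· + g))
        = Multiset.count (x - y) (diffMultiset (fanoLine B i)) := by
      intro B _
      rw [← count_trans _ x y hxy, Multiset.countP_map, Multiset.countP_eq_card_filter]
      congr 1
      exact Multiset.filter_congr (fun g _ => by simp [mem_img_add, sub_eq_add_neg])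
    rw [Multiset.map_congr rfl step]
    have hcount := (hDF i).2 (x - y) (sub_ne_zero.2 hxy)
    rw [Multiset.count_bind, Multiset.map_map] at hcount
    exact hcount
  · -- translation invariance
    intro g'
    have huniv : ((Finset.univ : Finset G).val.map (· + g') : Multiset G)
        = (Finset.univ : Finset G).val := by
      have h1 := congrArg Finset.val (Finset.map_univ_equiv (Equiv.addRight g'))
      rw [Finset.map_val] at h1
      simpa using h1
    rw [Multiset.map_bind]
    apply Multiset.bind_congr
    intro B _
    rw [Multiset.map_map]
    have keyfun : ∀ g : G,
        ((fun L : Fin 7 → Finset G => fun i => (L i).image (· + g')) ∘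
          fun g => fun j => (fanoLine B j).image (· + g)) g
        = fun j => (fanoLine B j).image (· + (g + g')) := by
      intro g
      funext j
      simp only [Function.comp]
      rw [Finset.image_image]
      congr 1
      funext c
      simp [add_assoc]
    rw [Multiset.map_congr rfl (fun g _ => keyfun g)]
    conv_rhs => rw [← huniv]
    rw [Multiset.map_map]
    rfl
end

section
/- (Jungnickel's composition) If there exist a (G,k,λ)-difference family in a finite additive group G, an (H,k,λ)-difference family in a finite additive group H, and an (H,k,1)-difference matrix, then there exists a (G × H,k,λ)-difference family in the direct product group G × H. -/
section JungnickelAux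

open Multiset Finset

variable {X : Type*} [AddGroup X] [DecidableEq X]

lemma jc_count_diffMultiset (B : Finset X) (a : X) :
    (diffMultiset B).count a =
      ((B ×ˢ B).filter fun p => p.1 ≠ p.2 ∧ p.1 - p.2 = a).card := by
  rw [diffMultiset, Multiset.count_map, ← Finset.filter_val, Finset.filter_filter]
  have : ((B ×ˢ B).filter fun p => p.1 ≠ p.2 ∧ a = p.1 - p.2)
      = ((B ×ˢ B).filter fun p => p.1 ≠ p.2 ∧ p.1 - p.2 = a) := by
    apply Finset.filter_congr
    intro p _
    simp [eq_comm]
  rw [this]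
  rfl

lemma jc_count_diffMultiset_image {ι : Type*} [DecidableEq ι] (s : Finset ι) (e : ι → X)
    (he : Function.Injective e) (a : X) :
    (diffMultiset (s.image e)).count a =
      ((s ×ˢ s).filter fun p => p.1 ≠ p.2 ∧ e p.1 - e p.2 = a).card := by
  rw [jc_count_diffMultiset]
  symm
  apply Finset.card_bij (fun p _ => (e p.1, e p.2))
  · intro p hp
    simp only [Finset.mem_filter, Finset.mem_product] at hp ⊢
    exact ⟨⟨Finset.mem_image_of_mem e hp.1.1, Finset.mem_image_of_mem e hp.1.2⟩,
      fun hh => hp.2.1 (he hh), hp.2.2⟩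
  · intro p hp q hq hpq
    have h1 : e p.1 = e q.1 := congrArg Prod.fst hpq
    have h2 : e p.2 = e q.2 := congrArg Prod.snd hpq
    exact Prod.ext (he h1) (he h2)
  · intro q hq
    simp only [Finset.mem_filter, Finset.mem_product, Finset.mem_image] at hq
    obtain ⟨⟨⟨x, hx, hxq⟩, ⟨y, hy, hyq⟩⟩, hne, hsub⟩ := hq
    refine ⟨(x, y), Finset.mem_filter.2 ⟨Finset.mem_product.2 ⟨hx, hy⟩, ?_, ?_⟩, ?_⟩
    · intro hxy
      exact hne (by rw [← hxq, ← hyq]; exact congrArg e hxy)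
    · rw [hxq, hyq]; exact hsub
    · rw [hxq, hyq]

lemma jc_count_zero_diffMultiset (B : Finset X) : (diffMultiset B).count 0 = 0 := by
  rw [jc_count_diffMultiset, Finset.card_eq_zero, Finset.filter_eq_empty_iff]
  rintro p -
  rintro ⟨hne, h0⟩
  exact hne (sub_eq_zero.1 h0)

lemma jc_filter_card_one {A B : Type*} [Fintype A] [DecidableEq A] [DecidableEq B]
    (f : A → B) (hf : Function.Bijective f) (b : B) :
    (Finset.univ.filter fun c => f c = b).card = 1 := by
  obtain ⟨c, hc, hu⟩ := hf.existsUnique b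
  rw [Finset.card_eq_one]
  refine ⟨c, ?_⟩
  ext x
  simp only [Finset.mem_filter, Finset.mem_univ, true_and, Finset.mem_singleton]
  exact ⟨fun hx => hu x hx, fun hx => hx ▸ hc⟩

end JungnickelAux

/-- Jungnickel's composition: From a (G,k,λ)-DF, an (H,k,λ)-DF and an
(H,k,1)-difference matrix one can build a (G × H,k,λ)-DF. -/
theorem diffFamily_product
    (G : Type) [AddCommGroup G] [Fintype G] [DecidableEq G]
    (H : Type) [AddCommGroup H] [Fintype H] [DecidableEq H]
    (k lam : ℕ)
    (𝓕 : Multiset (Finset G)) (hF : IsDiffFamily k lam 𝓕)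
    (𝓕' : Multiset (Finset H)) (hF' : IsDiffFamily k lam 𝓕')
    (M : Fin k → Fin (Fintype.card H) → H) (hM : IsDiffMatrix H k M) :
    ∃ 𝓓 : Multiset (Finset (G × H)), IsDiffFamily k lam 𝓓 := by
  classical
  -- an enumeration of a block of size `k`
  let enum : (B : Finset G) → B.card = k → Fin k → G :=
    fun B hB r => ((B.equivFinOfCardEq hB).symm r : G)
  have enum_inj : ∀ B hB, Function.Injective (enum B hB) := fun B hB =>
    Subtype.coe_injective.comp (Equiv.injective _)
  have enum_image : ∀ B hB, Finset.univ.image (enum B hB) = B := by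
    intro B hB
    ext x
    simp only [Finset.mem_image, Finset.mem_univ, true_and]
    constructor
    · rintro ⟨r, rfl⟩; exact ((B.equivFinOfCardEq hB).symm r).2
    · intro hx
      exact ⟨B.equivFinOfCardEq hB ⟨x, hx⟩, by simp [enum]⟩
  -- the blocks obtained from a block of `𝓕` via the difference matrix
  let blocks : Finset G → Multiset (Finset (G × H)) := fun B =>
    if hB : B.card = k then
      (Finset.univ : Finset (Fin (Fintype.card H))).val.map
        (fun c => Finset.univ.image (fun r : Fin k => (enum B hB r, M r c)))
    else 0
  refine ⟨𝓕.bind blocks + 𝓕'.map (fun B' => B'.image (fun x => ((0 : G), x))), ?_, ?_⟩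
  · -- all blocks have size k
    intro b hb
    rcases Multiset.mem_add.1 hb with hb | hb
    · obtain ⟨B, hBmem, hbB⟩ := Multiset.mem_bind.1 hb
      have hB : B.card = k := hF.1 B hBmem
      simp only [blocks, dif_pos hB] at hbB
      obtain ⟨c, -, rfl⟩ := Multiset.mem_map.1 hbB
      rw [Finset.card_image_of_injective _
        (fun r s hrs => enum_inj B hB (congrArg Prod.fst hrs))]
      simp
    · obtain ⟨B', hB'mem, rfl⟩ := Multiset.mem_map.1 hb
      rw [Finset.card_image_of_injective _
        (fun x y hxy => (congrArg Prod.snd hxy : x = y))]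
      exact hF'.1 B' hB'mem
  · rintro ⟨g, h⟩ hgh
    rw [Multiset.add_bind, Multiset.count_add]
    -- the contribution of the first part equals the count of g in ΔF
    have key : ∀ B ∈ 𝓕, ((blocks B).bind diffMultiset).count (g, h)
        = (diffMultiset B).count g := by
      intro B hBmem
      have hB : B.card = k := hF.1 B hBmem
      simp only [blocks, dif_pos hB]
      rw [Multiset.count_bind, Multiset.map_map]
      have hsum : (Multiset.map
          ((fun b => Multiset.count (g, h) (diffMultiset b)) ∘ fun c =>
            Finset.univ.image fun r : Fin k => (enum B hB r, M r c))
          (Finset.univ : Finset (Fin (Fintype.card H))).val).sum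
          = ∑ c : Fin (Fintype.card H),
            (diffMultiset ((Finset.univ : Finset (Fin k)).image
              fun r => (enum B hB r, M r c))).count (g, h) := rfl
      rw [hsum]
      have hcount : ∀ c : Fin (Fintype.card H),
          (diffMultiset ((Finset.univ : Finset (Fin k)).image
            fun r => (enum B hB r, M r c))).count (g, h)
          = ((Finset.univ ×ˢ Finset.univ).filter fun p : Fin k × Fin k =>
              p.1 ≠ p.2 ∧ enum B hB p.1 - enum B hB p.2 = g ∧
                M p.1 c - M p.2 c = h).card := by
        intro c
        rw [jc_count_diffMultiset_image _ _
          (fun r s hrs => enum_inj B hB (congrArg Prod.fst hrs))]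
        congr 1
        apply Finset.filter_congr
        intro p _
        simp [Prod.ext_iff]
      simp only [hcount]
      conv_rhs => rw [← enum_image B hB,
        jc_count_diffMultiset_image _ _ (enum_inj B hB)]
      simp only [Finset.card_filter]
      rw [Finset.sum_comm]
      refine Finset.sum_congr rfl fun p _ => ?_
      by_cases hp : p.1 ≠ p.2
      · by_cases hg : enum B hB p.1 - enum B hB p.2 = g
        · rw [if_pos ⟨hp, hg⟩]
          have hiff : ∀ c : Fin (Fintype.card H),
              (if p.1 ≠ p.2 ∧ enum B hB p.1 - enum B hB p.2 = g ∧
                  M p.1 c - M p.2 c = h then 1 else 0)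
              = if M p.1 c - M p.2 c = h then 1 else 0 := fun c => by simp [hp, hg]
          rw [Finset.sum_congr rfl (fun c _ => hiff c), ← Finset.card_filter]
          exact jc_filter_card_one _ (hM p.1 p.2 hp) h
        · simp [hg]
      · simp [hp]
    -- first summand
    have part1 : ((𝓕.bind blocks).bind diffMultiset).count (g, h)
        = (𝓕.bind diffMultiset).count g := by
      rw [Multiset.bind_assoc, Multiset.count_bind, Multiset.count_bind]
      exact congrArg Multiset.sum (Multiset.map_congr rfl key)
    -- second summand
    have lift_count : ∀ B' : Finset H,
        (diffMultiset (B'.image (fun x => ((0 : G), x)))).count (g, h)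
        = ((B' ×ˢ B').filter fun p => p.1 ≠ p.2 ∧ 0 = g ∧ p.1 - p.2 = h).card := by
      intro B'
      rw [jc_count_diffMultiset_image _ _
        (fun x y hxy => (congrArg Prod.snd hxy : x = y))]
      congr 1
      apply Finset.filter_congr
      intro p _
      simp [Prod.ext_iff]
    rw [part1]
    by_cases hg : g = 0
    · subst hg
      have hh : h ≠ 0 := by
        intro hh
        exact hgh (by rw [hh]; rfl)
      have hzero : (𝓕.bind diffMultiset).count (0 : G) = 0 := by
        rw [Multiset.count_bind]
        apply Multiset.sum_eq_zero
        intro x hx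
        obtain ⟨B, -, rfl⟩ := Multiset.mem_map.1 hx
        exact jc_count_zero_diffMultiset B
      rw [hzero, zero_add, Multiset.count_bind, Multiset.map_map]
      have : ∀ B' ∈ 𝓕', ((fun b => Multiset.count ((0 : G), h) (diffMultiset b)) ∘
          fun B' : Finset H => B'.image fun x => ((0 : G), x)) B'
          = (diffMultiset B').count h := by
        intro B' _
        simp only [Function.comp]
        rw [lift_count B', jc_count_diffMultiset]
        congr 1
        apply Finset.filter_congr
        intro p _
        simp
      rw [Multiset.map_congr rfl this]
      rw [← Multiset.count_bind]
      exact hF'.2 h hh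
    · have h2 : (((Multiset.map (fun B' : Finset H => B'.image fun x => ((0 : G), x)) 𝓕').bind
          diffMultiset).count (g, h)) = 0 := by
        rw [Multiset.count_bind]
        apply Multiset.sum_eq_zero
        intro x hx
        obtain ⟨b, hb, rfl⟩ := Multiset.mem_map.1 hx
        obtain ⟨B', -, rfl⟩ := Multiset.mem_map.1 hb
        rw [lift_count B', Finset.card_eq_zero, Finset.filter_eq_empty_iff]
        rintro p - ⟨-, h0, -⟩
        exact hg h0.symm
      rw [h2, add_zero]
      exact hF.2 g hg
end

section
/- (Special case of Wilson's lemma on evenly distributed differences) Let q = 6n+1 be a prime power and let ℓ be a 3-subset of F_q such that Δℓ = {1,−1}·T for a set T ⊆ F_q^* having exactly one element in each cyclotomic class of index 3. Then for any set S of representatives for the cosets of {1,−1} in C^3, the family { s·ℓ : s ∈ S } (where s·ℓ = { s·a : a ∈ ℓ }) is an (F_q,3,1)-difference family. -/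
/-- `x` and `y` lie in the same cyclotomic class of index 3 (coset of the nonzero
cubes). -/
def SameCubeClass {F : Type*} [Field F] (x y : F) : Prop :=
  ∃ c : F, c ≠ 0 ∧ x = y * c ^ 3

/-!
Multiplying `ℓ` by `s ≠ 0` multiplies its differences by `s`, so the differences of the family are
the products `s * (±t)` with `s ∈ S`, `t ∈ T`, i.e. `u * t` with `u ∈ S ∪ -S`. Since `S` represents
the cosets of `{1, -1}` in `C^3` and `-1 ≠ 1` (`q` is odd), `S ∪ -S` is `C^3` without repetition.
As `3 ∣ q - 1`, `C^3` has index 3 in `F_q^*`, so the three pairwise inequivalent elements of `T`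
form a transversal, and every `g ≠ 0` factors uniquely as `u * t` with `u ∈ C^3` and `t ∈ T`.
-/

section DiffMultiset

variable {G H : Type*} [AddGroup G] [AddGroup H] [DecidableEq G] [DecidableEq H]

theorem diffMultiset_image (f : G →+ H) (hf : Function.Injective f) (B : Finset G) :
    diffMultiset (B.image f) = (diffMultiset B).map f := by
  let e : G ↪ H := ⟨f, hf⟩
  rw [show B.image f = B.map e from (Finset.map_eq_image e B).symm, diffMultiset, diffMultiset,
    ← Finset.prodMap_map_product, Finset.filter_map, Finset.map_val, Multiset.map_map,
    Multiset.map_map]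
  refine congrArg₂ _ (funext fun p => ?_) (congrArg _ (Finset.filter_congr fun p _ => ?_))
  · simp [e]
  · simp [e, hf.ne_iff]

end DiffMultiset

namespace SameCubeClass

variable {F : Type*} [Field F]

theorem symm {x y : F} (h : SameCubeClass x y) : SameCubeClass y x := by
  obtain ⟨c, hc, rfl⟩ := h
  exact ⟨c⁻¹, inv_ne_zero hc, by field_simp⟩

theorem trans {x y z : F} (hxy : SameCubeClass x y) (hyz : SameCubeClass y z) :
    SameCubeClass x z := by
  obtain ⟨c, hc, rfl⟩ := hxy
  obtain ⟨d, hd, rfl⟩ := hyz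
  exact ⟨d * c, mul_ne_zero hd hc, by ring⟩

theorem units_iff {x y : Fˣ} :
    SameCubeClass (x : F) y ↔ (x : Fˣ ⧸ (powMonoidHom 3 : Fˣ →* Fˣ).range) = y := by
  rw [QuotientGroup.eq, MonoidHom.mem_range]
  constructor
  · rintro ⟨c, hc, hxy⟩
    refine ⟨(Units.mk0 c hc)⁻¹, Units.ext ?_⟩
    simp [hxy]
  · rintro ⟨c, hc⟩
    refine ⟨(c⁻¹ : Fˣ), Units.ne_zero _, ?_⟩
    have hc' : (c : F) ^ 3 = (x : F)⁻¹ * y := by simpa using congrArg Units.val hc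
    rw [Units.val_inv_eq_inv_val, inv_pow, hc']
    field_simp

end SameCubeClass

theorem FiniteField.index_range_powMonoidHom_three {F : Type*} [Field F] [Fintype F]
    (h3 : 3 ∣ Fintype.card F - 1) : (powMonoidHom 3 : Fˣ →* Fˣ).range.index = 3 := by
  rw [IsCyclic.index_powMonoidHom_range, Nat.card_units, Nat.card_eq_fintype_card]
  exact Nat.gcd_eq_right h3

theorem Finset.count_bind_map_mul {M : Type*} [GroupWithZero M] [DecidableEq M]
    {U : Finset M} (hU : ∀ u ∈ U, u ≠ 0) (T : Finset M) (g : M) :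
    (U.val.bind fun u => T.val.map (u * ·)).count g = (U.filter fun u => u⁻¹ * g ∈ T).card := by
  rw [Multiset.count_bind, Finset.card_filter]
  refine Finset.sum_congr rfl fun u hu => ?_
  calc (T.val.map (u * ·)).count g
      = (T.val.map (u * ·)).count (u * (u⁻¹ * g)) := by rw [mul_inv_cancel_left₀ (hU u hu)]
    _ = T.val.count (u⁻¹ * g) :=
        Multiset.count_map_eq_count' _ _ (mul_right_injective₀ (hU u hu)) _
    _ = if u⁻¹ * g ∈ T then 1 else 0 := Multiset.count_eq_of_nodup T.nodup

theorem Finset.val_add_map_neg_eq_filter {R : Type*} [Ring R] [IsDomain R] [Fintype R]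
    [DecidableEq R] (hR : ringChar R ≠ 2) {P : R → Prop} [DecidablePred P]
    (hP0 : ∀ x, P x → x ≠ 0) (hPneg : ∀ x, P x → P (-x)) {S : Finset R}
    (hS : ∀ s ∈ S, P s) (hSrep : ∀ x, P x → ∃! s, s ∈ S ∧ (x = s ∨ x = -s)) :
    S.val + S.val.map (fun s => -s) = (univ.filter P).val := by
  have hdisj : Disjoint S.val (S.val.map fun s => -s) := by
    refine Multiset.disjoint_left.2 fun {x} hx hx' => ?_
    obtain ⟨s, hs, rfl⟩ := Multiset.mem_map.1 hx'
    obtain ⟨r, -, hr⟩ := hSrep (-s) (hS _ hx)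
    have hsr : -s = s := (hr _ ⟨hx, Or.inl rfl⟩).trans (hr _ ⟨hs, Or.inr rfl⟩).symm
    exact hP0 s (hS s hs) ((Ring.eq_self_iff_eq_zero_of_char_ne_two hR).1 hsr)
  rw [Multiset.Nodup.ext ((S.nodup.add_iff (S.nodup.map neg_injective)).2 hdisj)
    (Finset.nodup _)]
  intro x
  simp only [Multiset.mem_add, Multiset.mem_map, Finset.mem_val, Finset.mem_filter,
    Finset.mem_univ, true_and]
  constructor
  · rintro (hx | ⟨s, hs, rfl⟩)
    exacts [hS x hx, hPneg s (hS s hs)]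
  · intro hx
    obtain ⟨s, ⟨hs, rfl | rfl⟩, -⟩ := hSrep x hx
    exacts [Or.inl hs, Or.inr ⟨s, hs, rfl⟩]

theorem existsUnique_sameCubeClass {F : Type*} [Field F] [Fintype F]
    (h3 : 3 ∣ Fintype.card F - 1) {T : Finset F} (hT0 : ∀ t ∈ T, t ≠ 0) (hTcard : T.card = 3)
    (hTclasses : ∀ t ∈ T, ∀ t' ∈ T, t ≠ t' → ¬ SameCubeClass t t') {g : F} (hg : g ≠ 0) :
    ∃! t, t ∈ T ∧ SameCubeClass g t := by
  classical
  let cls : T → Fˣ ⧸ (powMonoidHom 3 : Fˣ →* Fˣ).range := fun t => (Units.mk0 t (hT0 t t.2) : Fˣ)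
  have hinj : Function.Injective cls := by
    rintro ⟨t, ht⟩ ⟨t', ht'⟩ h
    by_contra hne
    exact hTclasses t ht t' ht' (fun h' => hne (Subtype.ext h')) (SameCubeClass.units_iff.2 h)
  have hsurj : Function.Surjective cls := by
    refine ((Fintype.bijective_iff_injective_and_card cls).2 ⟨hinj, ?_⟩).2
    rw [Fintype.card_coe, hTcard, ← Nat.card_eq_fintype_card]
    exact (FiniteField.index_range_powMonoidHom_three h3).symm
  obtain ⟨⟨t, ht⟩, hgt⟩ := hsurj (Units.mk0 g hg)
  have hgt : SameCubeClass g t := SameCubeClass.units_iff.2 hgt.symm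
  refine ⟨t, ⟨ht, hgt⟩, fun t' ⟨ht', hgt'⟩ => ?_⟩
  by_contra hne
  exact hTclasses t' ht' t ht hne (hgt'.symm.trans hgt)

theorem existsUnique_cube_inv_mul_mem {F : Type*} [Field F] [Fintype F]
    (h3 : 3 ∣ Fintype.card F - 1) {T : Finset F} (hT0 : ∀ t ∈ T, t ≠ 0) (hTcard : T.card = 3)
    (hTclasses : ∀ t ∈ T, ∀ t' ∈ T, t ≠ t' → ¬ SameCubeClass t t') {g : F} (hg : g ≠ 0) :
    ∃! u, (u ≠ 0 ∧ ∃ c, u = c ^ 3) ∧ u⁻¹ * g ∈ T := by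
  obtain ⟨t, ⟨ht, c, hc, hgt⟩, ht_unique⟩ :=
    existsUnique_sameCubeClass h3 hT0 hTcard hTclasses hg
  have hc3 : c ^ 3 ≠ 0 := pow_ne_zero 3 hc
  refine ⟨c ^ 3, ⟨⟨hc3, c, rfl⟩, ?_⟩, ?_⟩
  · rwa [hgt, mul_comm, mul_inv_cancel_right₀ hc3]
  · rintro u ⟨⟨hu, d, rfl⟩, hut⟩
    have hd : d ≠ 0 := by rintro rfl; simp at hu
    have hdt : (d ^ 3)⁻¹ * g = t := ht_unique _ ⟨hut, d, hd, by field_simp⟩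
    rw [inv_mul_eq_iff_eq_mul₀ (pow_ne_zero 3 hd), hgt, mul_comm] at hdt
    exact mul_right_cancel₀ (hT0 t ht) hdt.symm

theorem bind_diffMultiset_image_mul {K : Type*} [DivisionRing K] [DecidableEq K]
    {ℓ T : Finset K} (hΔ : diffMultiset ℓ = T.val + T.val.map fun t => -t)
    {S : Finset K} (hS : ∀ s ∈ S, s ≠ 0) :
    (S.val.map fun s => ℓ.image fun a => s * a).bind diffMultiset =
      (S.val + S.val.map fun s => -s).bind fun u => T.val.map (u * ·) := by
  rw [Multiset.bind_map, Multiset.add_bind, Multiset.bind_map, ← Multiset.bind_add]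
  refine Multiset.bind_congr fun s hs => ?_
  have := diffMultiset_image (AddMonoidHom.mulLeft s) (mul_right_injective₀ (hS s hs)) ℓ
  simp only [AddMonoidHom.coe_mulLeft] at this
  rw [this, hΔ, Multiset.map_add, Multiset.map_map]
  congr 2
  funext t
  simp

theorem wilson_evenly_distributed_differences_general
    (q n : ℕ) (hqn : q = 6 * n + 1)
    (F : Type) [Field F] [Fintype F] [DecidableEq F] (hcard : Fintype.card F = q)
    (ℓ T : Finset F) (hℓcard : ℓ.card = 3)
    (hT0 : ∀ t ∈ T, t ≠ 0) (hTcard : T.card = 3)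
    (hTclasses : ∀ t ∈ T, ∀ t' ∈ T, t ≠ t' → ¬ SameCubeClass t t')
    (hΔ : diffMultiset ℓ = T.val + T.val.map fun t => -t)
    (S : Finset F)
    (hS1 : ∀ s ∈ S, s ≠ 0 ∧ ∃ c : F, s = c ^ 3)
    (hS2 : ∀ x : F, x ≠ 0 → (∃ c : F, x = c ^ 3) →
      ∃! s, s ∈ S ∧ (x = s ∨ x = -s)) :
    IsDiffFamily 3 1 (S.val.map fun s => ℓ.image fun a => s * a) := by
  classical
  have hS0 : ∀ s ∈ S, s ≠ 0 := fun s hs => (hS1 s hs).1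
  have hchar : ringChar F ≠ 2 := fun h => by
    have := FiniteField.even_card_iff_char_two.1 h
    omega
  have hcubes : S.val + S.val.map (fun s => -s) =
      (Finset.univ.filter fun u : F => u ≠ 0 ∧ ∃ c, u = c ^ 3).val :=
    Finset.val_add_map_neg_eq_filter hchar (fun _ hx => hx.1)
      (fun _ ⟨hx, c, hc⟩ => ⟨neg_ne_zero.2 hx, -c, by rw [hc]; ring⟩) hS1
      (fun x hx => hS2 x hx.1 hx.2)
  refine ⟨fun B hB => ?_, fun g hg => ?_⟩
  · obtain ⟨s, hs, rfl⟩ := Multiset.mem_map.1 hB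
    rw [Finset.card_image_of_injective _ (mul_right_injective₀ (hS0 s hs)), hℓcard]
  · rw [bind_diffMultiset_image_mul hΔ hS0, hcubes,
      Finset.count_bind_map_mul (fun u hu => (Finset.mem_filter.1 hu).2.1),
      Finset.card_eq_one_iff_existsUnique]
    simpa only [Finset.mem_filter, Finset.mem_univ, true_and] using
      existsUnique_cube_inv_mul_mem ⟨2 * n, by omega⟩ hT0 hTcard hTclasses hg

/-- special case of Wilson's lemma on evenly distributed differences:
if `Δℓ = {1,-1}·T` with `T` having exactly one element in each cyclotomic class of
index 3, then `{s·ℓ : s ∈ S}` is an `(F_q,3,1)`-DF for any set `S` of representatives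
of the cosets of `{1,-1}` in the group of nonzero cubes. -/
theorem wilson_evenly_distributed_differences
    (q n : ℕ) (hq : IsPrimePow q) (hqn : q = 6 * n + 1)
    (F : Type) [Field F] [Fintype F] [DecidableEq F] (hcard : Fintype.card F = q)
    (ℓ T : Finset F) (hℓcard : ℓ.card = 3)
    (hT0 : ∀ t ∈ T, t ≠ 0) (hTcard : T.card = 3)
    (hTclasses : ∀ t ∈ T, ∀ t' ∈ T, t ≠ t' → ¬ SameCubeClass t t')
    (hΔ : diffMultiset ℓ = T.val + T.val.map fun t => -t)
    (S : Finset F)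
    (hS1 : ∀ s ∈ S, s ≠ 0 ∧ ∃ c : F, s = c ^ 3)
    (hS2 : ∀ x : F, x ≠ 0 → (∃ c : F, x = c ^ 3) →
      ∃! s, s ∈ S ∧ (x = s ∨ x = -s)) :
    IsDiffFamily 3 1 (S.val.map fun s => ℓ.image fun a => s * a) :=
  wilson_evenly_distributed_differences_general q n hqn F hcard ℓ T hℓcard hT0 hTcard hTclasses hΔ S
    hS1 hS2
end

section
/- Let p ≡ 1 (mod 6) be a prime such that 2 is not a cube modulo p while both 6 and 20 are cubes modulo p. Then the ordered 7-tuple A = (0,1,2,3,4,5,6) is the initial block of a Fano Kaleidoscopic difference family in Z/pZ: for any set S of representatives for the cosets of {1,−1} in C^3, the family { s·A : s ∈ S } (multiplying each coordinate of A by s) is an FKDF(p). -/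
/-!
Since `-1` is a cube, the differences of a block `s • {x, y, z}` are `±s(y - x)`, `±s(z - x)`,
`±s(z - y)`, and as `s` runs over `S` the multipliers `±s` run over the nonzero cubes exactly
once. Hence the development of `{x, y, z}` by `S` is a `(G, 3, 1)`-difference family as soon as
`y - x`, `z - x`, `z - y` lie in three different cubic classes: the cubes have index at most 3
(the kernel of cubing consists of cube roots of unity), so these classes cover `F^*`.
The lines of `(0, 1, …, 6)` have differences `(1, 3, 2)`, `(1, -4, -5)` or `(-6, -4, 2)`; when
`2` is not a cube while `6` and `20` are, these lie in the classes `C₀`, `2²C₀`, `2C₀`.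
-/

def IsCube {M : Type*} [Monoid M] (a : M) : Prop := ∃ r, a = r ^ 3

section IsCube

variable {M : Type*}

theorem isCube_zero [MonoidWithZero M] : IsCube (0 : M) := ⟨0, by simp⟩

theorem isCube_one [Monoid M] : IsCube (1 : M) := ⟨1, (one_pow 3).symm⟩

theorem isCube_pow_three [Monoid M] (a : M) : IsCube (a ^ 3) := ⟨a, rfl⟩

theorem IsCube.mul [CommMonoid M] {a b : M} : IsCube a → IsCube b → IsCube (a * b)
  | ⟨r, ha⟩, ⟨s, hb⟩ => ⟨r * s, by rw [ha, hb, mul_pow]⟩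

theorem IsCube.div [DivisionCommMonoid M] {a b : M} : IsCube a → IsCube b → IsCube (a / b)
  | ⟨r, ha⟩, ⟨s, hb⟩ => ⟨r / s, by rw [ha, hb, div_pow]⟩

theorem isCube_neg_iff [Monoid M] [HasDistribNeg M] {a : M} : IsCube (-a) ↔ IsCube a := by
  have h (b : M) : IsCube b → IsCube (-b) := fun ⟨r, hb⟩ =>
    ⟨-r, by rw [hb, Odd.neg_pow (by decide)]⟩
  exact ⟨fun ha => neg_neg a ▸ h _ ha, h a⟩

theorem ne_zero_of_not_isCube [MonoidWithZero M] {a : M} (ha : ¬IsCube a) : a ≠ 0 :=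
  fun h => ha (h ▸ isCube_zero)

end IsCube

section CubicClasses

variable {F : Type*} [Field F]

variable (F) in
abbrev cubeSubgroup : Subgroup Fˣ := (powMonoidHom 3 : Fˣ →* Fˣ).range

theorem isCube_val_div_iff {u v : Fˣ} :
    IsCube ((u : F) / v) ↔ (u : Fˣ ⧸ cubeSubgroup F) = v := by
  rw [QuotientGroup.eq_iff_div_mem, ← Units.val_div_eq_div_val]
  constructor
  · rintro ⟨r, hr⟩
    have hr0 : r ≠ 0 := by rintro rfl; simp at hr
    exact ⟨Units.mk0 r hr0, Units.ext (by simp [hr])⟩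
  · rintro ⟨r, hr⟩
    exact ⟨r, by simp [← hr]⟩

theorem card_quotient_cubeSubgroup_le [Finite F] : Nat.card (Fˣ ⧸ cubeSubgroup F) ≤ 3 := by
  rw [← Subgroup.index, Subgroup.index_range, ← rootsOfUnity_eq_ker]
  exact card_rootsOfUnity F 3

theorem isCube_div_of_not_isCube_div [Finite F] (g : F) {d₁ d₂ d₃ : F}
    (h₁₂ : ¬IsCube (d₁ / d₂)) (h₁₃ : ¬IsCube (d₁ / d₃)) (h₂₃ : ¬IsCube (d₂ / d₃)) :
    IsCube (g / d₁) ∨ IsCube (g / d₂) ∨ IsCube (g / d₃) := by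
  by_cases hg : g = 0
  · simp [hg, isCube_zero]
  have h₁ : d₁ ≠ 0 := by rintro rfl; simp [isCube_zero] at h₁₂
  have h₂ : d₂ ≠ 0 := by rintro rfl; simp [isCube_zero] at h₁₂
  have h₃ : d₃ ≠ 0 := by rintro rfl; simp [isCube_zero] at h₁₃
  lift g to Fˣ using Ne.isUnit hg
  lift d₁ to Fˣ using h₁.isUnit
  lift d₂ to Fˣ using h₂.isUnit
  lift d₃ to Fˣ using h₃.isUnit
  simp only [isCube_val_div_iff] at *
  by_contra! h
  classical
  let Q := Fˣ ⧸ cubeSubgroup F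
  have := Fintype.ofFinite Q
  have h4 := Finset.card_le_univ ({(g : Q), (d₁ : Q), (d₂ : Q), (d₃ : Q)} : Finset Q)
  rw [Finset.card_insert_of_notMem (by simp [h.1, h.2.1, h.2.2]),
    Finset.card_insert_of_notMem (by simp [h₁₂, h₁₃]), Finset.card_pair h₂₃,
    Fintype.card_eq_nat_card] at h4
  exact absurd (h4.trans card_quotient_cubeSubgroup_le) (by norm_num)

open Classical in
theorem ite_isCube_div_add_eq_one [Finite F] {g d₁ d₂ d₃ : F} (hg : g ≠ 0)
    (h₁₂ : ¬IsCube (d₁ / d₂)) (h₁₃ : ¬IsCube (d₁ / d₃)) (h₂₃ : ¬IsCube (d₂ / d₃)) :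
    ((if IsCube (g / d₁) then 1 else 0) + (if IsCube (g / d₂) then 1 else 0) +
      if IsCube (g / d₃) then 1 else 0 : ℕ) = 1 := by
  have both {a b : F} (ha : IsCube (g / a)) (hb : IsCube (g / b)) : IsCube (a / b) := by
    simpa [div_div_div_cancel_left' _ _ hg] using hb.div ha
  rcases isCube_div_of_not_isCube_div g h₁₂ h₁₃ h₂₃ with h | h | h
  · rw [if_pos h, if_neg fun h' => h₁₂ (both h h'), if_neg fun h' => h₁₃ (both h h')]
  · rw [if_pos h, if_neg fun h' => h₁₂ (both h' h), if_neg fun h' => h₂₃ (both h h')]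
  · rw [if_pos h, if_neg fun h' => h₁₃ (both h' h), if_neg fun h' => h₂₃ (both h' h)]

end CubicClasses

section DiffMultiset

variable {G H : Type*} [AddGroup G] [AddGroup H] [DecidableEq G] [DecidableEq H]

theorem diffMultiset_triple {x y z : G} (hxy : x ≠ y) (hxz : x ≠ z) (hyz : y ≠ z) :
    diffMultiset {x, y, z} = {y - x, z - x, z - y, x - y, x - z, y - z} := by
  have hv : ({x, y, z} : Finset G).val = x ::ₘ y ::ₘ {z} := by
    rw [Finset.insert_val_of_notMem (by simp [hxy, hxz]),
      Finset.insert_val_of_notMem (by simp [hyz])]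
    rfl
  unfold diffMultiset
  rw [Finset.filter_val, Finset.product_val, hv]
  simp only [ne_eq, Multiset.product_cons, Multiset.map_cons, Multiset.map_singleton,
    Multiset.cons_product, Multiset.product_singleton, Multiset.singleton_add, Multiset.add_cons,
    Multiset.cons_add, Multiset.filter_cons_of_pos, Multiset.filter_cons_of_neg,
    Multiset.filter_singleton, hxy, hxz, hyz, hxy.symm, hxz.symm, hyz.symm, not_true_eq_false,
    not_false_eq_true, ↓reduceIte, Multiset.empty_eq_zero, Multiset.cons_zero,
    Multiset.insert_eq_cons]
  simp only [← Multiset.cons_zero, Multiset.cons_swap]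

end DiffMultiset

section Multipliers

variable {F : Type*} [Field F]

theorem sum_countP_mul_eq_countP_div_mem [DecidableEq F] (S : Finset F) (hS : 0 ∉ S) {g : F}
    (hg : g ≠ 0) (M : Multiset F) :
    ∑ s ∈ S, M.countP (fun δ => g = s * δ) = M.countP (fun δ => g / δ ∈ S) := by
  induction M using Multiset.induction_on with
  | empty => simp
  | cons δ M ih =>
    have hδ : ∀ s ∈ S, (g = s * δ ↔ s = g / δ) := fun s hs => by
      rcases eq_or_ne δ 0 with rfl | hδ
      · simp only [mul_zero, div_zero, hg, false_iff]
        rintro rfl; exact hS hs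
      · rw [eq_div_iff hδ, eq_comm]
    simp only [Multiset.countP_cons, Finset.sum_add_distrib, ih]
    rw [Finset.sum_congr rfl fun s hs => if_congr (hδ s hs) rfl rfl, Finset.sum_ite_eq']

theorem count_bind_diffMultiset_image_mul [DecidableEq F] (S : Finset F) (hS : 0 ∉ S) {g : F}
    (hg : g ≠ 0) (B : Finset F) :
    ((S.val.map fun s => B.image (s * ·)).bind diffMultiset).count g =
      (diffMultiset B).countP (fun δ => g / δ ∈ S) := by
  rw [Multiset.count_bind, Multiset.map_map, ← sum_countP_mul_eq_countP_div_mem S hS hg,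
    Finset.sum_eq_multiset_sum]
  refine congrArg Multiset.sum (Multiset.map_congr rfl fun s hs => ?_)
  have hs : s ≠ 0 := ne_of_mem_of_not_mem hs hS
  have hmul := diffMultiset_image (AddMonoidHom.mulLeft s) (mul_right_injective₀ hs) B
  simp only [AddMonoidHom.coe_mulLeft] at hmul
  rw [Function.comp_apply, hmul, Multiset.count_map, Multiset.countP_eq_card_filter]

/-- A set of representatives for the cosets of `{1, -1}` in the group of nonzero cubes. -/
def IsCubeSignTransversal (S : Finset F) : Prop :=
  (∀ s ∈ S, s ≠ 0 ∧ IsCube s) ∧ ∀ x : F, x ≠ 0 → IsCube x → ∃! s, s ∈ S ∧ (x = s ∨ x = -s)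

open Classical in
theorem IsCubeSignTransversal.ite_mem_add_ite_neg_mem [DecidableEq F] {S : Finset F}
    (hS : IsCubeSignTransversal S) (h2 : (2 : F) ≠ 0) {u : F} (hu : u ≠ 0) :
    ((if u ∈ S then 1 else 0) + if -u ∈ S then 1 else 0 : ℕ) = if IsCube u then 1 else 0 := by
  by_cases hc : IsCube u
  · obtain ⟨s, ⟨hs, hus⟩, huniq⟩ := hS.2 u hu hc
    have hne : u ≠ -u := fun h => hu <| by
      have : (2 : F) * u = 0 := by linear_combination h
      simpa [h2] using this
    have hboth : ¬(u ∈ S ∧ -u ∈ S) := fun ⟨hpos, hneg⟩ =>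
      hne ((huniq u ⟨hpos, .inl rfl⟩).trans (huniq (-u) ⟨hneg, .inr (neg_neg u).symm⟩).symm)
    have hone : u ∈ S ∨ -u ∈ S := by
      rcases hus with rfl | rfl
      exacts [.inl hs, .inr (by rwa [neg_neg])]
    rw [if_pos hc]
    split_ifs <;> tauto
  · have hpos : u ∉ S := fun h => hc (hS.1 u h).2
    have hneg : -u ∉ S := fun h => hc (isCube_neg_iff.1 (hS.1 _ h).2)
    simp [hc, hpos, hneg]

theorem isDiffFamily_map_mul_triple [Finite F] [DecidableEq F] (h2 : (2 : F) ≠ 0)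
    {S : Finset F} (hS : IsCubeSignTransversal S) {x y z : F}
    (h₁₂ : ¬IsCube ((y - x) / (z - x))) (h₁₃ : ¬IsCube ((y - x) / (z - y)))
    (h₂₃ : ¬IsCube ((z - x) / (z - y))) :
    IsDiffFamily 3 1 (S.val.map fun s => ({s * x, s * y, s * z} : Finset F)) := by
  -- `a / 0 = 0` is a cube, so the hypotheses force the differences to be nonzero.
  have hyx : y - x ≠ 0 := by intro h; simp [h, isCube_zero] at h₁₂
  have hzx : z - x ≠ 0 := by intro h; simp [h, isCube_zero] at h₁₂
  have hzy : z - y ≠ 0 := by intro h; simp [h, isCube_zero] at h₁₃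
  have hxyz : ({x, y, z} : Finset F).card = 3 :=
    Finset.card_eq_three.2 ⟨x, y, z, (sub_ne_zero.1 hyx).symm, (sub_ne_zero.1 hzx).symm,
      (sub_ne_zero.1 hzy).symm, rfl⟩
  have hS0 : (0 : F) ∉ S := fun h => (hS.1 0 h).1 rfl
  have hblock (s : F) :
      ({s * x, s * y, s * z} : Finset F) = ({x, y, z} : Finset F).image (s * ·) := by
    simp [Finset.image_insert]
  simp only [hblock]
  refine ⟨fun B hB => ?_, fun g hg => ?_⟩
  · obtain ⟨s, hs, rfl⟩ := Multiset.mem_map.1 hB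
    rw [Finset.card_image_of_injective _ (mul_right_injective₀ (hS.1 s hs).1), hxyz]
  · rw [count_bind_diffMultiset_image_mul S hS0 hg, diffMultiset_triple (sub_ne_zero.1 hyx).symm
      (sub_ne_zero.1 hzx).symm (sub_ne_zero.1 hzy).symm]
    simp only [Multiset.insert_eq_cons, ← Multiset.cons_zero, Multiset.countP_cons,
      Multiset.countP_zero, ← neg_sub y x, ← neg_sub z x, ← neg_sub z y, div_neg]
    have e₁ := hS.ite_mem_add_ite_neg_mem h2 (div_ne_zero hg hyx)
    have e₂ := hS.ite_mem_add_ite_neg_mem h2 (div_ne_zero hg hzx)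
    have e₃ := hS.ite_mem_add_ite_neg_mem h2 (div_ne_zero hg hzy)
    have e := ite_isCube_div_add_eq_one hg h₁₂ h₁₃ h₂₃
    omega

-- `IsCube (d₂ * t)` and `IsCube (d₃ * t ^ 2)` say that `d₂ ∈ t²C₀` and `d₃ ∈ tC₀`.
theorem not_isCube_div_of_isCube_mul {t d₁ d₂ d₃ : F} (ht : ¬IsCube t) (h₁ : IsCube d₁)
    (h₂ : IsCube (d₂ * t)) (h₃ : IsCube (d₃ * t ^ 2))
    (hd₁ : d₁ ≠ 0) (hd₂ : d₂ ≠ 0) (hd₃ : d₃ ≠ 0) :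
    ¬IsCube (d₁ / d₂) ∧ ¬IsCube (d₁ / d₃) ∧ ¬IsCube (d₂ / d₃) := by
  have ht₀ := ne_zero_of_not_isCube ht
  refine ⟨fun h => ht ?_, fun h => ht ?_, fun h => ht ?_⟩
  · exact (show d₂ * t * (d₁ / d₂) / d₁ = t by field_simp) ▸ (h₂.mul h).div h₁
  · exact (show t ^ 3 * (d₁ / (d₁ / d₃)) / (d₃ * t ^ 2) = t by field_simp) ▸
      ((isCube_pow_three t).mul (h₁.div h)).div h₃
  · exact (show d₃ * t ^ 2 / (d₂ * t / (d₂ / d₃)) = t by field_simp) ▸ h₃.div (h₂.div h)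

theorem isDiffFamily_map_mul_of_sub_eq [Finite F] [DecidableEq F] (h2 : ¬IsCube (2 : F))
    (h6 : IsCube (6 : F)) (h20 : IsCube (20 : F)) (h3 : (3 : F) ≠ 0) (h5 : (5 : F) ≠ 0)
    {S : Finset F} (hS : IsCubeSignTransversal S) {x y z : F}
    (hxyz : (y - x, z - x, z - y) = (1, 3, 2) ∨ (y - x, z - x, z - y) = (1, -4, -5) ∨
      (y - x, z - x, z - y) = (-6, -4, 2)) :
    IsDiffFamily 3 1 (S.val.map fun s => ({s * x, s * y, s * z} : Finset F)) := by
  have h2₀ := ne_zero_of_not_isCube h2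
  have h8 : IsCube (8 : F) := ⟨2, by norm_num⟩
  have h4 : (4 : F) ≠ 0 := by simpa [show (4 : F) = 2 * 2 by norm_num] using h2₀
  have h6₀ : (6 : F) ≠ 0 := by simpa [show (6 : F) = 2 * 3 by norm_num] using ⟨h2₀, h3⟩
  obtain ⟨h₁₂, h₁₃, h₂₃⟩ : ¬IsCube ((y - x) / (z - x)) ∧ ¬IsCube ((y - x) / (z - y)) ∧
      ¬IsCube ((z - x) / (z - y)) := by
    simp only [Prod.mk.injEq] at hxyz
    rcases hxyz with ⟨e₁, e₂, e₃⟩ | ⟨e₁, e₂, e₃⟩ | ⟨e₁, e₂, e₃⟩ <;> rw [e₁, e₂, e₃] <;>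
      refine not_isCube_div_of_isCube_mul h2 ?_ ?_ ?_ ?_ ?_ ?_ <;>
      norm_num [isCube_neg_iff, isCube_one, h6, h8, h20, h2₀, h3, h4, h5, h6₀]
  exact isDiffFamily_map_mul_triple h2₀ hS h₁₂ h₁₃ h₂₃

end Multipliers

/-- if `p ≡ 1 (mod 6)` is a prime such that 2 is not a cube while 6 and 20
are cubes mod `p`, then `A = (0,1,2,3,4,5,6)` is the initial block of an FKDF(p): for any
set `S` of representatives for the cosets of `{1,-1}` in the group of nonzero cubes, the
family `{s·A : s ∈ S}` is an FKDF in `ℤ/pℤ`. -/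
theorem FKDF_initial_block_0123456
    (p : ℕ) (hp : p.Prime) (h1 : p % 6 = 1)
    (h2 : ¬ ∃ c : ZMod p, (2 : ZMod p) = c ^ 3)
    (h6 : ∃ c : ZMod p, (6 : ZMod p) = c ^ 3)
    (h20 : ∃ c : ZMod p, (20 : ZMod p) = c ^ 3)
    (S : Finset (ZMod p))
    (hS1 : ∀ s ∈ S, s ≠ 0 ∧ ∃ c : ZMod p, s = c ^ 3)
    (hS2 : ∀ x : ZMod p, x ≠ 0 → (∃ c : ZMod p, x = c ^ 3) →
      ∃! s, s ∈ S ∧ (x = s ∨ x = -s)) :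
    IsFKDF (S.val.map fun s => fun i : Fin 7 => s * ((i : ℕ) : ZMod p)) := by
  have : Fact p.Prime := ⟨hp⟩
  have hp7 : 7 ≤ p := by have := hp.two_le; omega
  have hcast : Function.Injective fun i : Fin 7 => ((i : ℕ) : ZMod p) := fun i j h => by
    rwa [ZMod.natCast_eq_natCast_iff', Nat.mod_eq_of_lt (by omega), Nat.mod_eq_of_lt (by omega),
      Fin.val_inj] at h
  have hne (n : Fin 7) (hn : n ≠ 0) : ((n : ℕ) : ZMod p) ≠ 0 := by
    simpa using hcast.ne hn
  refine ⟨?_, fun j => ?_⟩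
  · intro B hB
    obtain ⟨s, hs, rfl⟩ := Multiset.mem_map.1 hB
    exact (mul_right_injective₀ (hS1 s hs).1).comp hcast
  · simp only [Multiset.map_map, Function.comp_def, fanoLine]
    apply isDiffFamily_map_mul_of_sub_eq h2 h6 h20 (by simpa using hne 3 (by decide))
      (by simpa using hne 5 (by decide)) ⟨hS1, hS2⟩
    fin_cases j <;> norm_num [Fin.val_add]
end

section
/- For every positive integer n, there does not exist a cyclic Hesse Kaleidoscope of order 6n+3, i.e. there is no Z/(6n+3)Z-regular HK(6n+3). -/
section NoCyclicHKAux

variable {G : Type*} [AddCommGroup G] [DecidableEq G]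

/-- Translation of a colored plane. -/
def trHK (g : G) (L : Fin 12 → Finset G) : Fin 12 → Finset G :=
  fun i => (L i).image (· + g)

lemma trHK_trHK (g h : G) (L : Fin 12 → Finset G) : trHK h (trHK g L) = trHK (g + h) L := by
  funext i
  show ((L i).image (· + g)).image (· + h) = (L i).image (· + (g + h))
  rw [Finset.image_image]
  exact Finset.image_congr fun x _ => add_assoc x g h

lemma trHK_zero (L : Fin 12 → Finset G) : trHK (0 : G) L = L := by
  funext i; simp [trHK]

lemma trHK_inj (g : G) : Function.Injective (trHK (G := G) g) := by
  intro L M h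
  have h2 := congrArg (trHK (-g)) h
  rwa [trHK_trHK, trHK_trHK, show g + -g = 0 by simp, trHK_zero, trHK_zero] at h2

lemma hesse_free (L : Fin 12 → Finset G) (hL : IsColoredHesse L) (g : G) (hg : g ≠ 0)
    (heq : trHK g L = L) : False := by
  obtain ⟨hP, hcard, hpair⟩ := hL
  have hcl : ∀ i : Fin 12, ∀ x ∈ L i, x + g ∈ L i := by
    intro i x hx
    have h1 : x + g ∈ (L i).image (· + g) := Finset.mem_image_of_mem _ hx
    rwa [show (L i).image (· + g) = L i from congrFun heq i] at h1
  -- first: 2g ≠ 0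
  have h2g : g + g ≠ 0 := by
    intro h2
    obtain ⟨a, b, c, hab, hac, hbc, habc⟩ := Finset.card_eq_three.mp (hcard 0)
    have ha := hcl 0 a (by rw [habc]; simp)
    have hc := hcl 0 c (by rw [habc]; simp)
    have hb := hcl 0 b (by rw [habc]; simp)
    rw [habc] at ha hb hc
    simp only [Finset.mem_insert, Finset.mem_singleton] at ha hb hc
    rcases ha with h | h | h
    · exact hg (add_left_cancel (a := a) (by rw [add_zero]; exact h.symm)).symm
    · -- a + g = b
      rcases hc with h' | h' | h'
      · -- c + g = a, then c = a + g = b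
        apply hbc
        have : c = a + g := by rw [← h', add_assoc, h2, add_zero]
        rw [this, h]
      · exact hac (add_right_cancel (h'.trans h.symm)).symm
      · exact hg (add_left_cancel (a := c) (by rw [add_zero]; exact h'.symm)).symm
    · -- a + g = c
      rcases hb with h' | h' | h'
      · -- b + g = a, then b = a + g = c
        apply hbc
        have : b = a + g := by rw [← h', add_assoc, h2, add_zero]
        rw [this, h]
      · exact hg (add_left_cancel (a := b) (by rw [add_zero]; exact h'.symm)).symm
      · exact hab (add_right_cancel (h'.trans h.symm)).symm
  -- each line containing x equals {x, x+g, x+g+g}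
  have hline : ∀ i : Fin 12, ∀ x ∈ L i, L i = {x, x + g, x + g + g} := by
    intro i x hx
    have h1 := hcl i x hx
    have h2 := hcl i _ h1
    have d1 : x ≠ x + g := by
      intro e; exact hg (add_left_cancel (a := x) (by rw [add_zero]; exact e)).symm
    have d2 : x ≠ x + g + g := by
      intro e
      apply h2g
      have e' : x + 0 = x + (g + g) := by rw [add_zero, ← add_assoc]; exact e
      exact (add_left_cancel e').symm
    have d3 : x + g ≠ x + g + g := by
      intro e; exact hg (add_left_cancel (a := x + g) (by rw [add_zero]; exact e)).symm
    have hsub : ({x, x + g, x + g + g} : Finset G) ⊆ L i := by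
      intro y hy
      simp only [Finset.mem_insert, Finset.mem_singleton] at hy
      rcases hy with rfl | rfl | rfl <;> assumption
    have hS3 : ({x, x + g, x + g + g} : Finset G).card = 3 :=
      Finset.card_eq_three.mpr ⟨x, x + g, x + g + g, d1, d2, d3, rfl⟩
    exact (Finset.eq_of_subset_of_card_le hsub (by rw [hcard i, hS3])).symm
  -- now get a contradiction with the 9 points
  have hne : (linesPts L).Nonempty := Finset.card_pos.mp (by rw [hP]; norm_num)
  obtain ⟨x, hx⟩ := hne
  obtain ⟨i0, _, hxi0⟩ := Finset.mem_biUnion.mp hx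
  have hset := hline i0 x hxi0
  have hS3 : ({x, x + g, x + g + g} : Finset G).card = 3 := by rw [← hset]; exact hcard i0
  have hnsub : ¬ linesPts L ⊆ ({x, x + g, x + g + g} : Finset G) := by
    intro hsub
    have := Finset.card_le_card hsub
    rw [hP, hS3] at this
    omega
  obtain ⟨y, hy, hyS⟩ := Finset.not_subset.mp hnsub
  have hxy : x ≠ y := by rintro rfl; exact hyS (by simp)
  obtain ⟨i, ⟨hxi, hyi⟩, -⟩ := hpair x y hx hy hxy
  rw [hline i x hxi] at hyi
  exact hyS hyi

lemma card_dvd_of_invariant [Fintype G] (K : Multiset (Fin 12 → Finset G))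
    (hinv : ∀ g : G, K.map (trHK g) = K)
    (hfree : ∀ L ∈ K, ∀ g : G, g ≠ 0 → trHK g L ≠ L) :
    Fintype.card G ∣ Multiset.card K := by
  have huniv : ∀ g : G, (Finset.univ.val : Multiset G).map (· + g) = Finset.univ.val := by
    intro g
    have h1 : (Finset.univ.map (Equiv.addRight g).toEmbedding) = (Finset.univ : Finset G) :=
      Finset.map_univ_equiv _
    calc (Finset.univ.val : Multiset G).map (· + g)
        = (Finset.univ.map (Equiv.addRight g).toEmbedding).val := by rw [Finset.map_val]; rfl
      _ = Finset.univ.val := by rw [h1]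
  have hcnt : ∀ (s : Multiset (Fin 12 → Finset G)) (g : G) (x),
      Multiset.count x (s.map (trHK g)) = Multiset.count (trHK (-g) x) s := by
    intro s g x
    have hx : trHK g (trHK (-g) x) = x := by
      rw [trHK_trHK, show -g + g = 0 by simp, trHK_zero]
    conv_lhs => rw [← hx]
    exact Multiset.count_map_eq_count' _ _ (trHK_inj g) _
  suffices H : ∀ c (K : Multiset (Fin 12 → Finset G)), Multiset.card K = c →
      (∀ g : G, K.map (trHK g) = K) →
      (∀ L ∈ K, ∀ g : G, g ≠ 0 → trHK g L ≠ L) → Fintype.card G ∣ c by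
    exact H _ K rfl hinv hfree
  intro c
  induction c using Nat.strong_induction_on with
  | _ c ih =>
    intro K hc hinv hfree
    by_cases h0 : K = 0
    · subst h0
      simp only [Multiset.card_zero] at hc
      exact hc ▸ dvd_zero _
    · obtain ⟨a, ha⟩ := Multiset.exists_mem_of_ne_zero h0
      set O : Multiset (Fin 12 → Finset G) :=
        (Finset.univ.val : Multiset G).map (fun g => trHK g a) with hO
      have hinj : Function.Injective (fun g : G => trHK g a) := by
        intro g h e
        by_contra hne
        have e2 : trHK (g + -h) a = a := by
          have h3 := congrArg (trHK (-h)) e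
          rwa [trHK_trHK, trHK_trHK, show h + -h = 0 by simp, trHK_zero] at h3
        refine hfree a ha (g + -h) ?_ e2
        intro e0
        exact hne (by rwa [add_neg_eq_zero] at e0)
      have hnodup : O.Nodup := Multiset.Nodup.map hinj Finset.univ.nodup
      have hOle : O ≤ K := by
        rw [Multiset.le_iff_count]
        intro x
        by_cases hx : x ∈ O
        · rw [Multiset.count_eq_one_of_mem hnodup hx]
          obtain ⟨g, -, rfl⟩ := Multiset.mem_map.mp hx
          have h4 : Multiset.count (trHK g a) (K.map (trHK g)) = Multiset.count a K :=
            Multiset.count_map_eq_count' _ _ (trHK_inj g) _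
          rw [hinv g] at h4
          rw [h4]
          exact Multiset.one_le_count_iff_mem.mpr ha
        · rw [Multiset.count_eq_zero_of_notMem hx]; exact Nat.zero_le _
      have hOcard : Multiset.card O = Fintype.card G := by
        rw [hO, Multiset.card_map]; rfl
      have hOinv : ∀ g : G, O.map (trHK g) = O := by
        intro g
        rw [hO, Multiset.map_map]
        conv_rhs => rw [← huniv g, Multiset.map_map]
        exact Multiset.map_congr rfl (fun h _ => by simp [Function.comp, trHK_trHK])
      have hK'inv : ∀ g : G, (K - O).map (trHK g) = K - O := by
        intro g
        refine Multiset.ext.mpr fun x => ?_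
        rw [hcnt, Multiset.count_sub, Multiset.count_sub,
          ← hcnt K g x, ← hcnt O g x, hinv g, hOinv g]
      have hK'free : ∀ L ∈ K - O, ∀ g : G, g ≠ 0 → trHK g L ≠ L :=
        fun L hL => hfree L (Multiset.mem_of_le (tsub_le_self) hL)
      have hcards : Multiset.card O ≤ Multiset.card K := Multiset.card_le_card hOle
      have hcard' : Multiset.card (K - O) = Multiset.card K - Fintype.card G := by
        rw [Multiset.card_sub hOle, hOcard]
      have hpos : 0 < Fintype.card G := Fintype.card_pos
      have hlt : Multiset.card (K - O) < c := by
        rw [hcard']; omega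
      have hdvd' := ih _ hlt (K - O) rfl hK'inv hK'free
      have hceq : c = Multiset.card (K - O) + Fintype.card G := by
        rw [hcard']; omega
      rw [hceq]
      exact Nat.dvd_add hdvd' dvd_rfl

omit [AddCommGroup G] in
lemma sum_countP_hesse [Fintype G] (K : Multiset (Fin 12 → Finset G))
    (hK : ∀ L ∈ K, IsColoredHesse L) :
    ∑ p ∈ (Finset.univ : Finset G).offDiag,
      Multiset.countP (fun L => p.1 ∈ L 0 ∧ p.2 ∈ L 0) K = 6 * Multiset.card K := by
  induction K using Multiset.induction_on with
  | empty => simp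
  | cons a s ihs =>
    have ha : IsColoredHesse a := hK a (Multiset.mem_cons_self a s)
    have hs := ihs (fun L hL => hK L (Multiset.mem_cons_of_mem hL))
    simp only [Multiset.countP_cons]
    rw [Finset.sum_add_distrib, hs]
    have hfe : ((Finset.univ : Finset G).offDiag.filter (fun p => p.1 ∈ a 0 ∧ p.2 ∈ a 0))
        = (a 0).offDiag := by
      ext ⟨x, y⟩
      simp only [Finset.mem_filter, Finset.mem_offDiag, Finset.mem_univ, true_and]
      tauto
    have h6 : ∑ p ∈ (Finset.univ : Finset G).offDiag,
        (if p.1 ∈ a 0 ∧ p.2 ∈ a 0 then 1 else 0) = 6 := by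
      rw [← Finset.sum_filter, hfe, Finset.sum_const, smul_eq_mul, mul_one,
        Finset.offDiag_card, ha.2.1 0]
    rw [h6, Multiset.card_cons]
    ring

end NoCyclicHKAux

/-- for every positive integer `n` there is no cyclic (i.e.
`ℤ/(6n+3)ℤ`-regular) Hesse Kaleidoscope of order `6n+3`. -/
theorem no_cyclic_HK (n : ℕ) (hn : 0 < n) :
    ¬ ∃ K : Multiset (Fin 12 → Finset (ZMod (6 * n + 3))),
      IsRegularHK (ZMod (6 * n + 3)) K := by
  haveI : NeZero (6 * n + 3) := ⟨by omega⟩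
  rintro ⟨K, ⟨⟨hplanes, hpairs⟩, hinv⟩⟩
  have h1 : ∑ p ∈ (Finset.univ : Finset (ZMod (6 * n + 3))).offDiag,
      Multiset.countP (fun L => p.1 ∈ L 0 ∧ p.2 ∈ L 0) K = 6 * Multiset.card K :=
    sum_countP_hesse K hplanes
  have h2 : ∑ p ∈ (Finset.univ : Finset (ZMod (6 * n + 3))).offDiag,
      Multiset.countP (fun L => p.1 ∈ L 0 ∧ p.2 ∈ L 0) K
      = (6 * n + 3) * (6 * n + 3) - (6 * n + 3) := by
    rw [Finset.sum_congr rfl (fun p hp => hpairs p.1 p.2 ((Finset.mem_offDiag.mp hp).2.2) 0)]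
    simp [Finset.offDiag_card, Finset.card_univ, ZMod.card]
  have hdvd : (6 * n + 3) ∣ Multiset.card K := by
    have h5 := card_dvd_of_invariant K (fun g => hinv g)
      (fun L hL g hg heq => hesse_free L (hplanes L hL) g hg heq)
    rwa [ZMod.card] at h5
  obtain ⟨m, hm⟩ := hdvd
  rw [h1, hm] at h2
  clear h1 hpairs hplanes hinv
  have hpos : 0 < 6 * n + 3 := by omega
  have hvle : (6 * n + 3) ≤ (6 * n + 3) * (6 * n + 3) := Nat.le_mul_of_pos_left _ hpos
  have key : 6 * ((6 * n + 3) * m) + (6 * n + 3) = (6 * n + 3) * (6 * n + 3) := by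
    rw [h2, Nat.sub_add_cancel hvle]
  have key2 : (6 * n + 3) * (6 * m + 1) = (6 * n + 3) * (6 * n + 3) := by
    rw [← key]; ring
  have hfin : 6 * m + 1 = 6 * n + 3 := Nat.eq_of_mul_eq_mul_left hpos key2
  omega
end

section
/- If there exist a Hesse Kaleidoscopic difference family HKDF(G) in a finite additive group G, a Hesse Kaleidoscopic difference family HKDF(H) in a finite additive group H, and an (H,9,1)-difference matrix, then there exists a Hesse Kaleidoscopic difference family HKDF(G × H) in the direct product group G × H. -/
section HKDFAux

/-- The multiset `diffMultiset` never contains `0`. -/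
lemma zero_notMem_diffMultiset {G : Type*} [AddGroup G] [DecidableEq G] (B : Finset G) :
    (0 : G) ∉ diffMultiset B := by
  unfold diffMultiset
  simp only [Multiset.mem_map, Finset.mem_val, Finset.mem_filter]
  rintro ⟨⟨p, q⟩, ⟨-, hne⟩, h⟩
  exact hne (sub_eq_zero.mp h)

lemma count_zero_bind_diff {G : Type*} [AddGroup G] [DecidableEq G]
    (m : Multiset (Finset G)) : Multiset.count (0 : G) (m.bind diffMultiset) = 0 := by
  rw [Multiset.count_eq_zero]
  intro hmem
  obtain ⟨B, -, hB⟩ := Multiset.mem_bind.mp hmem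
  exact zero_notMem_diffMultiset B hB

/-- Count of an element in the difference multiset of a 3-element set. -/
lemma diff_count_triple {G : Type*} [AddGroup G] [DecidableEq G] (a b c x : G)
    (hab : a ≠ b) (hac : a ≠ c) (hbc : b ≠ c) :
    (diffMultiset {a, b, c}).count x =
      ((if a - b = x then 1 else 0) + (if b - a = x then 1 else 0)) +
        ((if a - c = x then 1 else 0) + (if c - a = x then 1 else 0)) +
        ((if b - c = x then 1 else 0) + (if c - b = x then 1 else 0)) := by
  have hval : ({a, b, c} : Finset G).val = (a ::ₘ b ::ₘ {c}) := by
    rw [show ({a, b, c} : Finset G) = insert a (insert b {c}) from rfl,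
      Finset.insert_val_of_notMem (by simp [hab, hac]),
      Finset.insert_val_of_notMem (by simp [hbc])]
    rfl
  unfold diffMultiset
  rw [Finset.filter_val, Finset.product_val, hval]
  simp [Multiset.count_map, Multiset.count_filter, hab, hac, hbc, hab.symm, hac.symm, hbc.symm,
    Multiset.filter_cons, Multiset.count_cons]
  simp only [eq_comm]
  ring

lemma card_triple {G : Type*} [DecidableEq G] {a b c : G}
    (hab : a ≠ b) (hac : a ≠ c) (hbc : b ≠ c) : ({a, b, c} : Finset G).card = 3 := by
  rw [Finset.card_insert_of_notMem (by simp [hab, hac]),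
    Finset.card_insert_of_notMem (by simp [hbc]), Finset.card_singleton]

/-- Evaluation of a 9-tuple at a position (`none` = the infinity point). -/
def kEv {G : Type*} (B : G × (Fin 8 → G)) : Option (Fin 8) → G := fun o => o.elim B.1 B.2

/-- The row of the difference matrix associated to a position. -/
def kRow : Option (Fin 8) → Fin 9 := fun o => o.elim 0 Fin.succ

/-- The three positions of the `i`-th Hesse line. -/
def kPos (i : Fin 12) : Option (Fin 8) × Option (Fin 8) × Option (Fin 8) :=
  if h : (i : ℕ) < 8 then (some ⟨i, h⟩, some (⟨i, h⟩ + 1), some (⟨i, h⟩ + 3))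
  else (none, some ⟨(i : ℕ) - 8, by have := i.isLt; omega⟩,
    some (⟨(i : ℕ) - 8, by have := i.isLt; omega⟩ + 4))

lemma hesseLine_eq' {G : Type*} [DecidableEq G] (i : Fin 12) (B : G × (Fin 8 → G)) :
    hesseLine B.1 B.2 i = {kEv B (kPos i).1, kEv B (kPos i).2.1, kEv B (kPos i).2.2} := by
  unfold hesseLine kPos
  split <;> rfl

lemma kPos_distinct : ∀ i : Fin 12,
    (kPos i).1 ≠ (kPos i).2.1 ∧ (kPos i).1 ≠ (kPos i).2.2 ∧ (kPos i).2.1 ≠ (kPos i).2.2 := by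
  decide

lemma kRow_inj : Function.Injective kRow := by decide

lemma kEv_inj {G : Type*} (B : G × (Fin 8 → G)) (h1 : Function.Injective B.2)
    (h2 : ∀ k, B.1 ≠ B.2 k) : Function.Injective (kEv B) := by
  intro o o' h
  match o, o' with
  | none, none => rfl
  | none, some k => exact absurd h (h2 k)
  | some k, none => exact absurd h.symm (h2 k)
  | some k, some k' => exact congrArg some (h1 h)

lemma sum_ite_pair {G H : Type*} [DecidableEq G] [DecidableEq H] {n : ℕ}
    (f : Fin n → H) (hf : Function.Bijective f) (A : G) (z : G × H) :
    (∑ c : Fin n, if (A, f c) = z then (1 : ℕ) else 0) = if A = z.1 then 1 else 0 := by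
  obtain ⟨g, h⟩ := z
  rcases eq_or_ne A g with rfl | hA
  · obtain ⟨c0, hc0⟩ := hf.surjective h
    have hiff : ∀ c : Fin n, ((A, f c) = (A, h)) ↔ c = c0 := by
      intro c
      simp only [Prod.mk.injEq, true_and]
      exact ⟨fun e => hf.injective (e.trans hc0.symm), fun e => e ▸ hc0⟩
    simp only [hiff]
    simp
  · simp [Prod.ext_iff, hA]

end HKDFAux

/-- From an HKDF(G), an HKDF(H) and an (H,9,1)-difference matrix one can
build an HKDF(G × H). -/
theorem HKDF_product
    (G : Type) [AddCommGroup G] [Fintype G] [DecidableEq G]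
    (H : Type) [AddCommGroup H] [Fintype H] [DecidableEq H]
    (𝓕 : Multiset (G × (Fin 8 → G))) (hF : IsHKDF 𝓕)
    (𝓕' : Multiset (H × (Fin 8 → H))) (hF' : IsHKDF 𝓕')
    (M : Fin 9 → Fin (Fintype.card H) → H) (hM : IsDiffMatrix H 9 M) :
    ∃ 𝓓 : Multiset ((G × H) × (Fin 8 → G × H)), IsHKDF 𝓓 := by
  classical
  set P : (G × (Fin 8 → G)) → Fin (Fintype.card H) → (G × H) × (Fin 8 → G × H) :=
    fun B c => ((B.1, M 0 c), fun k => (B.2 k, M k.succ c)) with hP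
  set Q : (H × (Fin 8 → H)) → (G × H) × (Fin 8 → G × H) :=
    fun B => ((0, B.1), fun k => (0, B.2 k)) with hQ
  have hPev : ∀ B c o, kEv (P B c) o = (kEv B o, M (kRow o) c) := by
    rintro B c (_ | k) <;> rfl
  have hQev : ∀ B o, kEv (Q B) o = ((0 : G), kEv B o) := by
    rintro B (_ | k) <;> rfl
  set 𝓓 : Multiset ((G × H) × (Fin 8 → G × H)) :=
    𝓕.bind (fun B => (Finset.univ.val : Multiset (Fin (Fintype.card H))).map (P B)) + 𝓕'.map Q with h𝓓
  have hblocks : ∀ D ∈ 𝓓, Function.Injective D.2 ∧ ∀ k, D.1 ≠ D.2 k := by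
    intro D hD
    rcases Multiset.mem_add.mp hD with hD | hD
    · obtain ⟨B, hB, hD⟩ := Multiset.mem_bind.mp hD
      obtain ⟨c, -, rfl⟩ := Multiset.mem_map.mp hD
      obtain ⟨h1, h2⟩ := hF.1 B hB
      exact ⟨fun k k' e => h1 (congrArg Prod.fst e), fun k e => h2 k (congrArg Prod.fst e)⟩
    · obtain ⟨B, hB, rfl⟩ := Multiset.mem_map.mp hD
      obtain ⟨h1, h2⟩ := hF'.1 B hB
      exact ⟨fun k k' e => h1 (congrArg Prod.snd e), fun k e => h2 k (congrArg Prod.snd e)⟩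
  refine ⟨𝓓, hblocks, fun i => ?_⟩
  obtain ⟨hpq, hpr, hqr⟩ := kPos_distinct i
  constructor
  · -- all lines have 3 points
    intro L hL
    obtain ⟨D, hD, rfl⟩ := Multiset.mem_map.mp hL
    obtain ⟨h1, h2⟩ := hblocks D hD
    have hinj := kEv_inj D h1 h2
    rw [hesseLine_eq']
    exact card_triple (fun e => hpq (hinj e)) (fun e => hpr (hinj e)) (fun e => hqr (hinj e))
  · intro z hz
    -- the key computation for blocks coming from 𝓕 × columns
    have keyG : ∀ B ∈ 𝓕,
        (∑ c : Fin (Fintype.card H),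
            Multiset.count z (diffMultiset (hesseLine (P B c).1 (P B c).2 i)))
          = Multiset.count z.1 (diffMultiset (hesseLine B.1 B.2 i)) := by
      intro B hB
      have hinj := kEv_inj B (hF.1 B hB).1 (hF.1 B hB).2
      have h1 : kEv B (kPos i).1 ≠ kEv B (kPos i).2.1 := fun e => hpq (hinj e)
      have h2 : kEv B (kPos i).1 ≠ kEv B (kPos i).2.2 := fun e => hpr (hinj e)
      have h3 : kEv B (kPos i).2.1 ≠ kEv B (kPos i).2.2 := fun e => hqr (hinj e)
      have step : ∀ c : Fin (Fintype.card H),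
          Multiset.count z (diffMultiset (hesseLine (P B c).1 (P B c).2 i)) =
          ((if (kEv B (kPos i).1 - kEv B (kPos i).2.1,
                M (kRow (kPos i).1) c - M (kRow (kPos i).2.1) c) = z then 1 else 0) +
            (if (kEv B (kPos i).2.1 - kEv B (kPos i).1,
                M (kRow (kPos i).2.1) c - M (kRow (kPos i).1) c) = z then 1 else 0)) +
          ((if (kEv B (kPos i).1 - kEv B (kPos i).2.2,
                M (kRow (kPos i).1) c - M (kRow (kPos i).2.2) c) = z then 1 else 0) +
            (if (kEv B (kPos i).2.2 - kEv B (kPos i).1,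
                M (kRow (kPos i).2.2) c - M (kRow (kPos i).1) c) = z then 1 else 0)) +
          ((if (kEv B (kPos i).2.1 - kEv B (kPos i).2.2,
                M (kRow (kPos i).2.1) c - M (kRow (kPos i).2.2) c) = z then 1 else 0) +
            (if (kEv B (kPos i).2.2 - kEv B (kPos i).2.1,
                M (kRow (kPos i).2.2) c - M (kRow (kPos i).2.1) c) = z then 1 else 0)) := by
        intro c
        rw [hesseLine_eq' i (P B c), hPev, hPev, hPev,
          diff_count_triple _ _ _ _ (fun e => h1 (congrArg Prod.fst e))
            (fun e => h2 (congrArg Prod.fst e)) (fun e => h3 (congrArg Prod.fst e))]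
        simp only [Prod.mk_sub_mk]
      have S : ∀ u v : Option (Fin 8), u ≠ v → ∀ A : G,
          (∑ c : Fin (Fintype.card H), if (A, M (kRow u) c - M (kRow v) c) = z then (1 : ℕ) else 0) =
            if A = z.1 then 1 else 0 :=
        fun u v huv A =>
          sum_ite_pair _ (hM (kRow u) (kRow v) (fun e => huv (kRow_inj e))) A z
      simp only [step]
      rw [Finset.sum_add_distrib, Finset.sum_add_distrib, Finset.sum_add_distrib,
        Finset.sum_add_distrib, Finset.sum_add_distrib,
        S _ _ hpq _, S _ _ (Ne.symm hpq) _, S _ _ hpr _, S _ _ (Ne.symm hpr) _,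
        S _ _ hqr _, S _ _ (Ne.symm hqr) _,
        hesseLine_eq' i B, diff_count_triple _ _ _ _ h1 h2 h3]
    -- the key computation for blocks coming from 𝓕'
    have keyH : ∀ B ∈ 𝓕',
        Multiset.count z (diffMultiset (hesseLine (Q B).1 (Q B).2 i)) =
          if z.1 = 0 then Multiset.count z.2 (diffMultiset (hesseLine B.1 B.2 i)) else 0 := by
      intro B hB
      have hinj := kEv_inj B (hF'.1 B hB).1 (hF'.1 B hB).2
      have h1 : kEv B (kPos i).1 ≠ kEv B (kPos i).2.1 := fun e => hpq (hinj e)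
      have h2 : kEv B (kPos i).1 ≠ kEv B (kPos i).2.2 := fun e => hpr (hinj e)
      have h3 : kEv B (kPos i).2.1 ≠ kEv B (kPos i).2.2 := fun e => hqr (hinj e)
      rw [hesseLine_eq' i (Q B), hQev, hQev, hQev,
        diff_count_triple _ _ _ _ (fun e => h1 (congrArg Prod.snd e))
          (fun e => h2 (congrArg Prod.snd e)) (fun e => h3 (congrArg Prod.snd e)),
        hesseLine_eq' i B, diff_count_triple _ _ _ _ h1 h2 h3]
      obtain ⟨zg, zh⟩ := z
      rcases eq_or_ne zg 0 with rfl | hzg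
      · simp [Prod.mk_sub_mk, Prod.ext_iff]
      · simp [Prod.mk_sub_mk, Prod.ext_iff, hzg, Ne.symm hzg]
    -- assemble
    rw [h𝓓, Multiset.map_add, Multiset.add_bind, Multiset.count_add,
      Multiset.map_bind]
    have e1 : Multiset.count z
        ((𝓕.bind fun B =>
          Multiset.map (fun D => hesseLine D.1 D.2 i)
            (Multiset.map (P B) Finset.univ.val)).bind diffMultiset)
        = Multiset.count z.1
            ((𝓕.map fun B => hesseLine B.1 B.2 i).bind diffMultiset) := by
      rw [Multiset.bind_assoc, Multiset.count_bind, Multiset.count_bind, Multiset.map_map]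
      congr 1
      refine Multiset.map_congr rfl fun B hB => ?_
      rw [Multiset.map_map, Multiset.bind_map, Multiset.count_bind]
      simp only [Function.comp_apply]
      exact keyG B hB
    have e2 : Multiset.count z ((Multiset.map (fun D => hesseLine D.1 D.2 i)
          (𝓕'.map Q)).bind diffMultiset)
        = if z.1 = 0 then
            Multiset.count z.2 ((𝓕'.map fun B => hesseLine B.1 B.2 i).bind diffMultiset)
          else 0 := by
      rw [Multiset.map_map, Multiset.count_bind, Multiset.map_map]
      rcases eq_or_ne z.1 0 with hz1 | hz1
      · rw [if_pos hz1, Multiset.count_bind, Multiset.map_map]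
        congr 1
        refine Multiset.map_congr rfl fun B hB => ?_
        simpa [hz1] using keyH B hB
      · rw [if_neg hz1]
        rw [Multiset.sum_eq_zero]
        intro x hx
        obtain ⟨B, hB, rfl⟩ := Multiset.mem_map.mp hx
        simpa [hz1] using keyH B hB
    rw [e1, e2]
    rcases eq_or_ne z.1 0 with hz1 | hz1
    · have hz2 : z.2 ≠ 0 := by
        intro h2
        exact hz (Prod.ext hz1 h2)
      rw [if_pos hz1, hz1, count_zero_bind_diff, (hF'.2 i).2 z.2 hz2]
    · rw [if_neg hz1, (hF.2 i).2 z.1 hz1]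
end

section
/- If there exists a 2-(v,7,1) design, then there exists a Fano Kaleidoscope FK(v): replicating each block of the design seven times with cyclically shifted line-colorings yields an FK(v). -/
private lemma fano7 : ∀ a b : Fin 7, a ≠ b →
    ∃ j : Fin 7, (a ∈ ({j, j + 1, j + 3} : Finset (Fin 7)) ∧
      b ∈ ({j, j + 1, j + 3} : Finset (Fin 7))) ∧
      ∀ k : Fin 7, (a ∈ ({k, k + 1, k + 3} : Finset (Fin 7)) ∧
        b ∈ ({k, k + 1, k + 3} : Finset (Fin 7))) → k = j := by decide

private lemma fano7_card : ∀ t : Fin 7, ({t, t + 1, t + 3} : Finset (Fin 7)).card = 3 := by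
  decide

private lemma countP_eq_sum_ind {α : Type*} (p : α → Prop) [DecidablePred p]
    (s : Multiset α) :
    (s.map fun a => if p a then 1 else 0).sum = Multiset.countP p s := by
  induction s using Multiset.induction_on with
  | empty => simp
  | cons a t ih => by_cases h : p a <;> simp [h, ih, Multiset.countP_cons, add_comm]

/-- if a 2-(v,7,1) design exists then a Fano Kaleidoscope FK(v) exists. -/
theorem exists_FK_of_steiner
    (v : ℕ) (V : Type) [Fintype V] [DecidableEq V] (hV : Fintype.card V = v)
    (𝓑 : Multiset (Finset V)) (h : Is2Design 7 1 𝓑) :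
    ∃ K : Multiset (Fin 7 → Finset V), IsFanoKaleidoscope K := by
  classical
  obtain ⟨hcard, hpair⟩ := h
  by_cases hne : Nonempty V
  · obtain ⟨v0⟩ := hne
    -- enumeration of each 7-element block
    have cardB : ∀ B : Finset V, B.card = 7 → Fintype.card B = 7 := fun B hB => by
      simpa using hB
    set e : Finset V → Fin 7 → V := fun B i =>
      if hB : B.card = 7 then ((Fintype.equivFinOfCardEq (cardB B hB)).symm i : V) else v0
      with he
    have hinj : ∀ B : Finset V, B.card = 7 → Function.Injective (e B) := by
      intro B hB i j hij
      simp only [he, dif_pos hB] at hij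
      exact (Fintype.equivFinOfCardEq (cardB B hB)).symm.injective (Subtype.ext hij)
    have hmem : ∀ B : Finset V, B.card = 7 → ∀ i, e B i ∈ B := by
      intro B hB i
      simp only [he, dif_pos hB]
      exact ((Fintype.equivFinOfCardEq (cardB B hB)).symm i).2
    have hsurj : ∀ B : Finset V, B.card = 7 → ∀ x ∈ B, ∃ a, e B a = x := by
      intro B hB x hx
      refine ⟨Fintype.equivFinOfCardEq (cardB B hB) ⟨x, hx⟩, ?_⟩
      simp [he, dif_pos hB]
    -- the plane of block B with shift s
    set pl : Finset V → Fin 7 → Fin 7 → Finset V := fun B s i =>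
      ({i + s, i + s + 1, i + s + 3} : Finset (Fin 7)).image (e B) with hpl
    set P : Finset V → Multiset (Fin 7 → Finset V) :=
      fun B => (Finset.univ.val.map fun s : Fin 7 => pl B s) with hP
    have plmem : ∀ B s i x, x ∈ pl B s i ↔ ∃ a ∈ ({i + s, i + s + 1, i + s + 3} :
        Finset (Fin 7)), e B a = x := by
      intro B s i x
      simp only [hpl]
      exact Finset.mem_image
    -- points of a plane of B equal B
    have hpts : ∀ B : Finset V, B.card = 7 → ∀ s, linesPts (pl B s) = B := by
      intro B hB s
      ext x
      simp only [linesPts, Finset.mem_biUnion, Finset.mem_univ, true_and]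
      constructor
      · rintro ⟨i, hi⟩
        rw [plmem] at hi
        obtain ⟨a, -, rfl⟩ := hi
        exact hmem B hB a
      · intro hx
        obtain ⟨a, rfl⟩ := hsurj B hB x hx
        refine ⟨a - s, ?_⟩
        rw [plmem]
        exact ⟨a, by simp, rfl⟩
    -- the key membership translation
    have memline : ∀ B : Finset V, B.card = 7 → ∀ s i (a : Fin 7),
        (e B a ∈ pl B s i ↔ a ∈ ({i + s, i + s + 1, i + s + 3} : Finset (Fin 7))) := by
      intro B hB s i a
      rw [plmem]
      constructor
      · rintro ⟨b, hb, hba⟩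
        rwa [← hinj B hB hba]
      · intro ha; exact ⟨a, ha, rfl⟩
    refine ⟨𝓑.bind P, ?_, ?_⟩
    · -- every member is a colored Fano plane
      intro L hL
      rw [Multiset.mem_bind] at hL
      obtain ⟨B, hB𝓑, hLB⟩ := hL
      have hB : B.card = 7 := hcard B hB𝓑
      simp only [hP, Multiset.mem_map] at hLB
      obtain ⟨s, -, rfl⟩ := hLB
      refine ⟨by rw [hpts B hB s]; exact hB, ?_, ?_⟩
      · intro i
        rw [hpl]
        rw [Finset.card_image_of_injective _ (hinj B hB), fano7_card]
      · intro x y hx hy hxy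
        rw [hpts B hB s] at hx hy
        obtain ⟨a, rfl⟩ := hsurj B hB x hx
        obtain ⟨b, rfl⟩ := hsurj B hB y hy
        have hab : a ≠ b := fun hh => hxy (by rw [hh])
        obtain ⟨j, ⟨hja, hjb⟩, hju⟩ := fano7 a b hab
        refine ⟨j - s, ?_, ?_⟩
        · constructor <;> rw [memline B hB] <;> rw [sub_add_cancel] <;> assumption
        · intro i hi
          rw [memline B hB, memline B hB] at hi
          exact eq_sub_of_add_eq (hju (i + s) hi)
    · -- the counting condition
      intro x y hxy i
      rw [countP_bind']
      have : (Multiset.map (fun B => Multiset.countP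
          (fun L => x ∈ L i ∧ y ∈ L i) (P B)) 𝓑) =
          Multiset.map (fun B => if x ∈ B ∧ y ∈ B then 1 else 0) 𝓑 := by
        apply Multiset.map_congr rfl
        intro B hB𝓑
        have hB : B.card = 7 := hcard B hB𝓑
        rw [hP]
        rw [Multiset.countP_map]
        by_cases hxyB : x ∈ B ∧ y ∈ B
        · rw [if_pos hxyB]
          obtain ⟨a, rfl⟩ := hsurj B hB x hxyB.1
          obtain ⟨b, rfl⟩ := hsurj B hB y hxyB.2
          have hab : a ≠ b := fun hh => hxy (by rw [hh])
          obtain ⟨j, ⟨hja, hjb⟩, hju⟩ := fano7 a b hab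
          have hfin : Finset.filter (fun s => e B a ∈ pl B s i ∧ e B b ∈ pl B s i)
              Finset.univ = {j - i} := by
            ext s
            simp only [Finset.mem_filter, Finset.mem_univ, true_and,
              Finset.mem_singleton]
            rw [memline B hB, memline B hB]
            constructor
            · intro hs
              have h2 := hju (i + s) hs
              rw [add_comm] at h2
              exact eq_sub_of_add_eq h2
            · rintro rfl
              rw [add_sub_cancel]
              exact ⟨hja, hjb⟩
          have hval : Multiset.filter (fun s => e B a ∈ pl B s i ∧ e B b ∈ pl B s i)
              Finset.univ.val = ({j - i} : Finset (Fin 7)).val := by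
            rw [← hfin]; rfl
          rw [hval]
          rfl
        · rw [if_neg hxyB]
          rw [Multiset.card_eq_zero, Multiset.filter_eq_nil]
          intro s _ hs
          exact hxyB ⟨(hpts B hB s) ▸ Finset.mem_biUnion.2 ⟨i, Finset.mem_univ i, hs.1⟩,
            (hpts B hB s) ▸ Finset.mem_biUnion.2 ⟨i, Finset.mem_univ i, hs.2⟩⟩
      rw [this, countP_eq_sum_ind, hpair x y hxy]
  · refine ⟨0, ?_, ?_⟩
    · intro L hL; exact absurd hL (Multiset.notMem_zero L)
    · intro x; exact absurd ⟨x⟩ hne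
end

section
/- If v ≥ 2 and a Fano Kaleidoscope FK(v) exists, then v ≡ 1 (mod 6); moreover, the multiset of 7-point sets of the planes of any FK(v) forms the block multiset of a 2-(v,7,7) design. -/
private lemma countP_eq_sum_map {α : Type*} (p : α → Prop) [DecidablePred p]
    (s : Multiset α) :
    s.countP p = (s.map fun a => if p a then 1 else 0).sum := by
  induction s using Multiset.induction with
  | empty => simp
  | cons a s ih =>
    by_cases h : p a <;> simp [Multiset.countP_cons, h, ih, Nat.add_comm]

private lemma sum_finset_sum_map {α β : Type*} (s : Multiset α) (t : Finset β)
    (f : β → α → ℕ) :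
    ∑ y ∈ t, (s.map (f y)).sum = (s.map fun a => ∑ y ∈ t, f y a).sum := by
  induction s using Multiset.induction with
  | empty => simp
  | cons a s ih =>
    simp only [Multiset.map_cons, Multiset.sum_cons, Finset.sum_add_distrib, ih]

private lemma mem_line_mem_pts {V : Type*} [DecidableEq V] {L : Fin 7 → Finset V}
    {i : Fin 7} {x : V} (hx : x ∈ L i) : x ∈ linesPts L :=
  Finset.mem_biUnion.mpr ⟨i, Finset.mem_univ i, hx⟩

private lemma pair_count {V : Type*} [DecidableEq V]
    {K : Multiset (Fin 7 → Finset V)} (hK : IsFanoKaleidoscope K)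
    {x y : V} (hxy : x ≠ y) :
    Multiset.countP (fun L => x ∈ linesPts L ∧ y ∈ linesPts L) K = 7 := by
  have h2 : ∀ L ∈ K, (if x ∈ linesPts L ∧ y ∈ linesPts L then 1 else 0) =
      ∑ i : Fin 7, (if x ∈ L i ∧ y ∈ L i then 1 else 0) := by
    intro L hL
    have hF := hK.1 L hL
    rw [← Finset.card_filter]
    by_cases hp : x ∈ linesPts L ∧ y ∈ linesPts L
    · obtain ⟨i₀, hi₀, hun⟩ := hF.2.2 x y hp.1 hp.2 hxy
      rw [if_pos hp]
      symm
      rw [Finset.card_eq_one]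
      refine ⟨i₀, ?_⟩
      ext j
      simp only [Finset.mem_filter, Finset.mem_univ, true_and, Finset.mem_singleton]
      exact ⟨fun h => hun j h, fun h => h ▸ hi₀⟩
    · rw [if_neg hp]
      symm
      rw [Finset.card_eq_zero, Finset.filter_eq_empty_iff]
      intro i _ hi
      exact hp ⟨mem_line_mem_pts hi.1, mem_line_mem_pts hi.2⟩
  calc Multiset.countP (fun L => x ∈ linesPts L ∧ y ∈ linesPts L) K
      = (K.map fun L => if x ∈ linesPts L ∧ y ∈ linesPts L then 1 else 0).sum :=
        countP_eq_sum_map _ _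
    _ = (K.map fun L => ∑ i : Fin 7, (if x ∈ L i ∧ y ∈ L i then 1 else 0)).sum := by
        rw [Multiset.map_congr rfl h2]
    _ = ∑ i : Fin 7, (K.map fun L => if x ∈ L i ∧ y ∈ L i then 1 else 0).sum :=
        (sum_finset_sum_map _ _ _).symm
    _ = ∑ i : Fin 7, Multiset.countP (fun L => x ∈ L i ∧ y ∈ L i) K := by
        refine Finset.sum_congr rfl fun i _ => (countP_eq_sum_map _ _).symm
    _ = ∑ _i : Fin 7, 1 := by
        refine Finset.sum_congr rfl fun i _ => hK.2 x y hxy i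
    _ = 7 := by simp

/-- if `v ≥ 2` and an FK(v) exists, then `v ≡ 1 (mod 6)`; moreover, the
multiset of point sets of the planes of any FK(v) is the block multiset of a
2-(v,7,7) design. -/
theorem FK_necessary_condition_and_underlying_design
    (v : ℕ) (hv : 2 ≤ v)
    (V : Type) [Fintype V] [DecidableEq V] (hV : Fintype.card V = v)
    (K : Multiset (Fin 7 → Finset V)) (hK : IsFanoKaleidoscope K) :
    v % 6 = 1 ∧ Is2Design 7 7 (K.map linesPts) := by
  have hdes : Is2Design 7 7 (K.map linesPts) := by
    constructor
    · intro b hb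
      obtain ⟨L, hL, rfl⟩ := Multiset.mem_map.mp hb
      exact (hK.1 L hL).1
    · intro x y hxy
      rw [Multiset.countP_map, ← Multiset.countP_eq_card_filter]
      exact pair_count hK hxy
  refine ⟨?_, hdes⟩
  -- pick a point x
  have hpos : 0 < Fintype.card V := by omega
  obtain ⟨x⟩ := Fintype.card_pos_iff.mp hpos
  set r := Multiset.countP (fun L => x ∈ linesPts L) K with hr
  have hA : ∑ y ∈ Finset.univ.erase x,
      Multiset.countP (fun L => x ∈ linesPts L ∧ y ∈ linesPts L) K = (v - 1) * 7 := by
    rw [Finset.sum_congr rfl fun y hy =>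
      pair_count hK fun h => (Finset.mem_erase.mp hy).1 h.symm]
    rw [Finset.sum_const, Finset.card_erase_of_mem (Finset.mem_univ x),
      Finset.card_univ, hV, smul_eq_mul]
  have hB : ∑ y ∈ Finset.univ.erase x,
      Multiset.countP (fun L => x ∈ linesPts L ∧ y ∈ linesPts L) K = 6 * r := by
    have h2 : ∀ L ∈ K,
        (∑ y ∈ Finset.univ.erase x,
          (if x ∈ linesPts L ∧ y ∈ linesPts L then 1 else 0)) =
        6 * (if x ∈ linesPts L then 1 else 0) := by
      intro L hL
      by_cases hx : x ∈ linesPts L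
      · rw [if_pos hx, mul_one]
        have : ∀ y, (x ∈ linesPts L ∧ y ∈ linesPts L) ↔ y ∈ linesPts L :=
          fun y => ⟨fun h => h.2, fun h => ⟨hx, h⟩⟩
        simp only [this]
        rw [← Finset.card_filter]
        have hfe : (Finset.univ.erase x).filter (· ∈ linesPts L) =
            (linesPts L).erase x := by
          ext y
          simp only [Finset.mem_filter, Finset.mem_erase, Finset.mem_univ, true_and,
            and_comm]
        rw [hfe, Finset.card_erase_of_mem hx, (hK.1 L hL).1]
      · rw [if_neg hx, mul_zero]
        refine Finset.sum_eq_zero fun y _ => ?_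
        rw [if_neg fun h => hx h.1]
    calc ∑ y ∈ Finset.univ.erase x,
          Multiset.countP (fun L => x ∈ linesPts L ∧ y ∈ linesPts L) K
        = ∑ y ∈ Finset.univ.erase x,
          (K.map fun L => if x ∈ linesPts L ∧ y ∈ linesPts L then 1 else 0).sum :=
          Finset.sum_congr rfl fun y _ => countP_eq_sum_map _ _
      _ = (K.map fun L => ∑ y ∈ Finset.univ.erase x,
          (if x ∈ linesPts L ∧ y ∈ linesPts L then 1 else 0)).sum :=
          sum_finset_sum_map _ _ _
      _ = (K.map fun L => 6 * (if x ∈ linesPts L then 1 else 0)).sum := by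
          rw [Multiset.map_congr rfl h2]
      _ = 6 * (K.map fun L => if x ∈ linesPts L then 1 else 0).sum :=
          Multiset.sum_map_mul_left
      _ = 6 * r := by rw [hr, countP_eq_sum_map]
  have : (v - 1) * 7 = 6 * r := hA ▸ hB
  omega
end
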